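/- arXiv:1005.0150 — 5 statements merged into one kernel-verified Lean document; each statement's English description precedes it below -/
import Mathlib

section
/- Let M be an increment martingale and τ a stopping time. If the family {M_0 − M_{(τ∨(−n))∧0} : n ≥ 1} is uniformly integrable, then (M_t − M_{t∧τ})_{t∈ℝ} is a martingale. -/
open MeasureTheory Filter Set

noncomputable section

variable {Ω : Type*}

/-- The increment of the process `M` over the interval `(s, ·]`:  `ˢM_t = M_t - M_{t ∧ s}`. -/
def incr (M : ℝ → Ω → ℝ) (s t : ℝ) (ω : Ω) : ℝ := M t ω - M (min t s) ω

/-- A real function is càdlàg : right-continuous with left limits. -/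
def Cadlag (f : ℝ → ℝ) : Prop :=
  (∀ t, ContinuousWithinAt f (Set.Ici t) t) ∧
    ∀ t : ℝ, ∃ l, Tendsto f (nhdsWithin t (Set.Iio t)) (nhds l)

/-- The jump `ΔM_t(ω) = M_t(ω) - M_{t-}(ω)`. -/
def jump (M : ℝ → Ω → ℝ) (ω : Ω) (t : ℝ) : ℝ :=
  M t ω - Function.leftLim (fun u => M u ω) t

/-- A filtration indexed by `ℝ` is right-continuous. -/
def RightContinuousFiltration {m : MeasurableSpace Ω} (ℱ : Filtration ℝ m) : Prop :=
  ∀ t : ℝ, (ℱ t : MeasurableSpace Ω) = ⨅ (u : ℝ) (_ : t < u), (ℱ u : MeasurableSpace Ω)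

/-- Each `ℱ t` contains all `μ`-null sets. -/
def CompleteFiltration {m : MeasurableSpace Ω} (ℱ : Filtration ℝ m) (μ : Measure Ω) : Prop :=
  ∀ (t : ℝ) (s : Set Ω), μ s = 0 → MeasurableSet[ℱ t] s

/-- A martingale in the sense of the paper: adapted, integrable, with the martingale property. -/
def IsMart {m : MeasurableSpace Ω} (ℱ : Filtration ℝ m) (μ : Measure Ω) (M : ℝ → Ω → ℝ) : Prop :=
  Martingale M ℱ μ ∧ ∀ t, Integrable (M t) μ

/-- A square integrable martingale. -/
def IsSqMart {m : MeasurableSpace Ω} (ℱ : Filtration ℝ m) (μ : Measure Ω)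
    (M : ℝ → Ω → ℝ) : Prop :=
  IsMart ℱ μ M ∧ ∀ t, MemLp (M t) 2 μ

/-- An increment martingale: a càdlàg process all of whose increment processes are
martingales. -/
def IsIncMart {m : MeasurableSpace Ω} (ℱ : Filtration ℝ m) (μ : Measure Ω)
    (M : ℝ → Ω → ℝ) : Prop :=
  (∀ ω, Cadlag fun t => M t ω) ∧ ∀ s : ℝ, IsMart ℱ μ (incr M s)

/-- An increment square integrable martingale. -/
def IsIncSqMart {m : MeasurableSpace Ω} (ℱ : Filtration ℝ m) (μ : Measure Ω)
    (M : ℝ → Ω → ℝ) : Prop :=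
  (∀ ω, Cadlag fun t => M t ω) ∧ ∀ s : ℝ, IsSqMart ℱ μ (incr M s)

/-- The process `M` stopped at the (finite) random time `τ`. -/
def stopped (M : ℝ → Ω → ℝ) (τ : Ω → ℝ) : ℝ → Ω → ℝ := fun t ω => M (min t (τ ω)) ω

/-- A localizing sequence of real-valued stopping times. -/
def Localizing {m : MeasurableSpace Ω} (ℱ : Filtration ℝ m) (μ : Measure Ω)
    (σ : ℕ → Ω → ℝ) : Prop :=
  (∀ n, IsStoppingTime ℱ (fun ω => ((σ n ω : ℝ) : WithTop ℝ))) ∧ (∀ ω, Monotone fun n => σ n ω) ∧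
    ∀ᵐ ω ∂μ, Tendsto (fun n => σ n ω) atTop atTop

/-- A local martingale indexed by `ℝ`. -/
def IsLocalMart {m : MeasurableSpace Ω} (ℱ : Filtration ℝ m) (μ : Measure Ω)
    (M : ℝ → Ω → ℝ) : Prop :=
  ∃ σ : ℕ → Ω → ℝ, Localizing ℱ μ σ ∧ ∀ n, IsMart ℱ μ (stopped M (σ n))

/-- A locally square integrable martingale indexed by `ℝ`. -/
def IsLocSqMart {m : MeasurableSpace Ω} (ℱ : Filtration ℝ m) (μ : Measure Ω)
    (M : ℝ → Ω → ℝ) : Prop :=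
  ∃ σ : ℕ → Ω → ℝ, Localizing ℱ μ σ ∧ ∀ n, IsSqMart ℱ μ (stopped M (σ n))

/-- An increment local martingale: every increment process is adapted and a local
martingale (with a localizing sequence possibly depending on `s`). -/
def IsIncLocalMart {m : MeasurableSpace Ω} (ℱ : Filtration ℝ m) (μ : Measure Ω)
    (M : ℝ → Ω → ℝ) : Prop :=
  (∀ ω, Cadlag fun t => M t ω) ∧
    ∀ s : ℝ, Adapted ℱ (incr M s) ∧ IsLocalMart ℱ μ (incr M s)

/-- An increment locally square integrable martingale. -/
def IsIncLocSqMart {m : MeasurableSpace Ω} (ℱ : Filtration ℝ m) (μ : Measure Ω)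
    (M : ℝ → Ω → ℝ) : Prop :=
  (∀ ω, Cadlag fun t => M t ω) ∧
    ∀ s : ℝ, Adapted ℱ (incr M s) ∧ IsLocSqMart ℱ μ (incr M s)

/-- A stopping time with values in `(-∞, ∞]` (encoded in `EReal`, `⊥` excluded separately). -/
def IsStoppingTimeE {m : MeasurableSpace Ω} (ℱ : Filtration ℝ m) (τ : Ω → EReal) : Prop :=
  ∀ t : ℝ, MeasurableSet[ℱ t] {ω | τ ω ≤ (t : EReal)}

/-- The process `M` stopped at the `EReal`-valued random time `τ`. -/
def stoppedE (M : ℝ → Ω → ℝ) (τ : Ω → EReal) : ℝ → Ω → ℝ :=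
  fun t ω => M ((min (t : EReal) (τ ω)).toReal) ω

/-- The process `M`, extended to `-∞` by `Z` and stopped at the `EReal`-valued time `τ`,
as a process indexed by `EReal` (only the values on `[-∞, ∞)` are relevant). -/
def stopE' (M : ℝ → Ω → ℝ) (Z : Ω → ℝ) (τ : Ω → EReal) (t : EReal) (ω : Ω) : ℝ :=
  if min t (τ ω) = ⊥ then Z ω else M ((min t (τ ω)).toReal) ω

/-- The filtration extended to the index `-∞` by `ℱ_{-∞} = ⨅ t, ℱ t`. -/
def FE {m : MeasurableSpace Ω} (ℱ : Filtration ℝ m) (t : EReal) : MeasurableSpace Ω :=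
  if t = ⊥ then ⨅ u : ℝ, (ℱ u : MeasurableSpace Ω) else ℱ t.toReal

/-- A martingale indexed by `[-∞, ∞)` with respect to the extended filtration. -/
def IsMartE {m : MeasurableSpace Ω} (ℱ : Filtration ℝ m) (μ : Measure Ω)
    (N : EReal → Ω → ℝ) : Prop :=
  (∀ t : EReal, t ≠ ⊤ → StronglyMeasurable[FE ℱ t] (N t)) ∧
  (∀ t : EReal, t ≠ ⊤ → Integrable (N t) μ) ∧
  ∀ s t : EReal, s ≤ t → t ≠ ⊤ → μ[N t | FE ℱ s] =ᵐ[μ] N s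

/-- The predictable σ-algebra on `ℝ × Ω`, generated by the simple predictable sets
`B × C` with `C ∈ ℱ t` and `B ⊆ (t, ∞)` a bounded Borel set. -/
def predictableSigma {m : MeasurableSpace Ω} (ℱ : Filtration ℝ m) :
    MeasurableSpace (ℝ × Ω) :=
  MeasurableSpace.generateFrom
    {A | ∃ (t : ℝ) (B : Set ℝ) (C : Set Ω), B ⊆ Set.Ioi t ∧ MeasurableSet B ∧
      Bornology.IsBounded B ∧ MeasurableSet[ℱ t] C ∧ A = B ×ˢ C}

/-- A predictable process. -/
def PredictableProc {m : MeasurableSpace Ω} (ℱ : Filtration ℝ m) (X : ℝ → Ω → ℝ) : Prop :=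
  @Measurable (ℝ × Ω) ℝ (predictableSigma ℱ) _ fun p => X p.1 p.2

/-- The process `X` is associated with the family of increment processes `I`. -/
def Assoc {m : MeasurableSpace Ω} (μ : Measure Ω) (I : ℝ → ℝ → Ω → ℝ) (X : ℝ → Ω → ℝ) : Prop :=
  ∀ s : ℝ, ∀ᵐ ω ∂μ, ∀ t, X t ω - X (min t s) ω = I s t ω

/-- `V` is a quadratic variation of the increment local martingale `M`:
`V ∈ A₀(ℱ)`, `ΔV = (ΔM)²` and `(ˢM)² - ˢV` is a local martingale for every `s`. -/
def IsQuadVar {m : MeasurableSpace Ω} (ℱ : Filtration ℝ m) (μ : Measure Ω)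
    (M V : ℝ → Ω → ℝ) : Prop :=
  (∀ ω, Monotone fun t => V t ω) ∧ (∀ ω, Cadlag fun t => V t ω) ∧ Adapted ℱ V ∧
  (∀ᵐ ω ∂μ, Tendsto (fun t => V t ω) atBot (nhds 0)) ∧
  (∀ᵐ ω ∂μ, ∀ t, jump V ω t = (jump M ω t) ^ 2) ∧
  ∀ s : ℝ, IsLocalMart ℱ μ fun t ω => (incr M s t ω) ^ 2 - incr V s t ω

/-- `V` is a predictable quadratic variation of `M`: an increasing predictable càdlàg
adapted locally integrable process with `V_{-∞} = 0` a.s. such that `(ˢM)² - ˢV` is a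
local martingale for every `s`. -/
def IsPredQV {m : MeasurableSpace Ω} (ℱ : Filtration ℝ m) (μ : Measure Ω)
    (M V : ℝ → Ω → ℝ) : Prop :=
  (∀ ω, Monotone fun t => V t ω) ∧ (∀ ω, Cadlag fun t => V t ω) ∧ Adapted ℱ V ∧
  PredictableProc ℱ V ∧
  (∀ᵐ ω ∂μ, Tendsto (fun t => V t ω) atBot (nhds 0)) ∧
  (∃ σ : ℕ → Ω → ℝ, Localizing ℱ μ σ ∧ ∀ n t, Integrable (stopped V (σ n) t) μ) ∧
  ∀ s : ℝ, IsLocalMart ℱ μ fun t ω => (incr M s t ω) ^ 2 - incr V s t ω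

/-- `Mc` is a continuous martingale component of the increment local martingale `M`:
it is continuous, its increments are adapted local martingales, and the increments of
`M - Mc` are purely discontinuous local martingales (orthogonal to every continuous
local martingale vanishing at `-∞`). -/
def IsContMartPart {m : MeasurableSpace Ω} (ℱ : Filtration ℝ m) (μ : Measure Ω)
    (M Mc : ℝ → Ω → ℝ) : Prop :=
  (∀ ω, Continuous fun t => Mc t ω) ∧
  (∀ s : ℝ, Adapted ℱ (incr Mc s)) ∧
  (∀ s : ℝ, IsLocalMart ℱ μ (incr Mc s)) ∧
  (∀ s : ℝ, IsLocalMart ℱ μ fun t ω => incr M s t ω - incr Mc s t ω) ∧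
  ∀ s : ℝ, ∀ N : ℝ → Ω → ℝ, (∀ ω, Continuous fun t => N t ω) → IsLocalMart ℱ μ N →
    (∀ᵐ ω ∂μ, Tendsto (fun t => N t ω) atBot (nhds 0)) →
    IsLocalMart ℱ μ fun t ω => (incr M s t ω - incr Mc s t ω) * N t ω

/-- The Lebesgue–Stieltjes measure on `ℝ` induced by the (pathwise increasing,
right-continuous) process `V` at the outcome `ω`. -/
def stj (V : ℝ → Ω → ℝ) (hm : ∀ ω, Monotone fun t => V t ω)
    (hrc : ∀ ω t, ContinuousWithinAt (fun u => V u ω) (Set.Ici t) t) (ω : Ω) : Measure ℝ :=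
  StieltjesFunction.measure ⟨fun t => V t ω, hm ω, hrc ω⟩

end

/-!
Cut `τ` off from below: with `σₙ = τ ∨ (-n-1)`, the process `M - M^{σₙ}` is the increment
martingale `M_t - M_{t ∧ (-n-1)}` minus its stopped process, hence a martingale by optional
sampling for right-continuous martingales (dyadic approximation of the stopping times from above,
plus Vitali's theorem). As `n → ∞` these martingales converge pointwise to `M - M^τ`. At a time
`T ≥ 0` they are uniformly integrable: up to the uniformly integrable family of the hypothesis at
time `0`, they are values of the martingale `M_t - M_{t ∧ 0}` at stopping times bounded by `T`,
i.e. conditional expectations of one integrable variable. So they converge in `L¹` there, and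
since conditional expectations are `L¹`-contractions the martingale property passes to the limit.
-/

open Topology

section Dyadic

noncomputable def dyadicCeil (k : ℕ) (s : ℝ) : ℝ := ⌈s * 2 ^ k⌉ / 2 ^ k

lemma le_dyadicCeil (k : ℕ) (s : ℝ) : s ≤ dyadicCeil k s := by
  rw [dyadicCeil, le_div_iff₀ (by positivity)]
  exact Int.le_ceil _

lemma dyadicCeil_le_add (k : ℕ) (s : ℝ) : dyadicCeil k s ≤ s + (2 ^ k)⁻¹ := by
  rw [dyadicCeil, div_le_iff₀ (by positivity), add_mul, inv_mul_cancel₀ (by positivity)]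
  exact (Int.ceil_lt_add_one _).le

lemma dyadicCeil_le_iff {k : ℕ} {s v : ℝ} : dyadicCeil k s ≤ v ↔ s ≤ ⌊v * 2 ^ k⌋ / 2 ^ k := by
  rw [dyadicCeil, div_le_iff₀ (by positivity), le_div_iff₀ (by positivity), ← Int.le_floor,
    ← Int.ceil_le]

lemma floor_mul_two_pow_div_le (k : ℕ) (v : ℝ) : (⌊v * 2 ^ k⌋ : ℝ) / 2 ^ k ≤ v := by
  rw [div_le_iff₀ (by positivity)]
  exact Int.floor_le _

lemma measurable_dyadicCeil (k : ℕ) : Measurable (dyadicCeil k) :=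
  (measurable_from_top.comp (measurable_id.mul_const _).ceil).div_const _

lemma tendsto_min_dyadicCeil {s b : ℝ} (hsb : s ≤ b) :
    Tendsto (fun k => min b (dyadicCeil k s)) atTop (𝓝[≥] s) := by
  have hinv : Tendsto (fun k : ℕ => s + ((2 : ℝ) ^ k)⁻¹) atTop (𝓝 s) := by
    simpa using tendsto_const_nhds.add
      (tendsto_inv_atTop_zero.comp (tendsto_pow_atTop_atTop_of_one_lt (one_lt_two : (1 : ℝ) < 2)))
  have hceil : Tendsto (dyadicCeil · s) atTop (𝓝 s) :=
    tendsto_of_tendsto_of_tendsto_of_le_of_le tendsto_const_nhds hinv (le_dyadicCeil · s)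
      (dyadicCeil_le_add · s)
  refine tendsto_nhdsWithin_iff.2 ⟨?_, Eventually.of_forall fun k => le_min hsb (le_dyadicCeil k s)⟩
  simpa [min_eq_right hsb] using (tendsto_const_nhds (x := b)).min hceil

lemma countable_range_min_dyadicCeil {α : Type*} (f : α → ℝ) (b : ℝ) (k : ℕ) :
    (range fun a => min b (dyadicCeil k (f a))).Countable := by
  refine ((countable_range fun z : ℤ => (z : ℝ) / 2 ^ k).insert b).mono ?_
  rintro _ ⟨a, rfl⟩
  rcases min_choice b (dyadicCeil k (f a)) with h | h <;> simp only [h]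
  · exact mem_insert _ _
  · exact mem_insert_of_mem _ ⟨_, rfl⟩

end Dyadic

namespace MeasureTheory

variable {Ω : Type*} {m : MeasurableSpace Ω} {μ : Measure Ω}

section UniformIntegrable

variable {κ β : Type*} [NormedAddCommGroup β] {p : ENNReal} {f g : κ → Ω → β}

protected theorem UniformIntegrable.add (hf : UniformIntegrable f p μ)
    (hg : UniformIntegrable g p μ) (hp : 1 ≤ p) : UniformIntegrable (f + g) p μ := by
  obtain ⟨Cf, hCf⟩ := hf.2.2
  obtain ⟨Cg, hCg⟩ := hg.2.2
  refine ⟨fun i => (hf.1 i).add (hg.1 i), hf.2.1.add hg.2.1 hp hf.1 hg.1, Cf + Cg, fun i => ?_⟩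
  calc eLpNorm (f i + g i) p μ ≤ eLpNorm (f i) p μ + eLpNorm (g i) p μ :=
        eLpNorm_add_le (hf.1 i) (hg.1 i) hp
    _ ≤ Cf + Cg := add_le_add (hCf i) (hCg i)

protected theorem UniformIntegrable.sub (hf : UniformIntegrable f p μ)
    (hg : UniformIntegrable g p μ) (hp : 1 ≤ p) : UniformIntegrable (f - g) p μ := by
  obtain ⟨Cf, hCf⟩ := hf.2.2
  obtain ⟨Cg, hCg⟩ := hg.2.2
  refine ⟨fun i => (hf.1 i).sub (hg.1 i), hf.2.1.sub hg.2.1 hp hf.1 hg.1, Cf + Cg, fun i => ?_⟩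
  calc eLpNorm (f i - g i) p μ ≤ eLpNorm (f i) p μ + eLpNorm (g i) p μ :=
        eLpNorm_sub_le (hf.1 i) (hg.1 i) hp
    _ ≤ Cf + Cg := add_le_add (hCf i) (hCg i)

end UniformIntegrable

lemma UniformIntegrable.tendsto_eLpNorm_sub_of_ae_tendsto {β : Type*} [NormedAddCommGroup β]
    [IsFiniteMeasure μ] {p : ENNReal} (hp : 1 ≤ p) (hp' : p ≠ ⊤) {f : ℕ → Ω → β} {g : Ω → β}
    (hf : UniformIntegrable f p μ) (hfg : ∀ᵐ ω ∂μ, Tendsto (f · ω) atTop (𝓝 (g ω))) :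
    Tendsto (fun n => eLpNorm (f n - g) p μ) atTop (𝓝 0) :=
  tendsto_Lp_finite_of_tendsto_ae hp hp' hf.1 (hf.memLp_of_ae_tendsto hfg) hf.2.1 hfg

lemma ae_eq_of_tendsto_eLpNorm_of_ae_tendsto {E : Type*} [NormedAddCommGroup E]
    [IsFiniteMeasure μ] {p : ENNReal} (hp : p ≠ 0) {F : ℕ → Ω → E} {f g : Ω → E}
    (hF : ∀ n, AEStronglyMeasurable (F n) μ) (hf : AEStronglyMeasurable f μ)
    (hLp : Tendsto (fun n => eLpNorm (F n - f) p μ) atTop (𝓝 0))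
    (hg : ∀ᵐ ω ∂μ, Tendsto (F · ω) atTop (𝓝 (g ω))) : f =ᵐ[μ] g :=
  tendstoInMeasure_ae_unique (tendstoInMeasure_of_tendsto_eLpNorm hp hF hf hLp)
    (tendstoInMeasure_of_tendsto_ae hF hg)

section RightContinuous

variable {ℱ : Filtration ℝ m}

theorem StronglyAdapted.isStronglyProgressive_of_rightContinuous {X : ℝ → Ω → ℝ}
    (hX : StronglyAdapted ℱ X) (hrc : ∀ ω t, ContinuousWithinAt (X · ω) (Ici t) t) :
    IsStronglyProgressive ℱ X := by
  intro i
  let mprod : MeasurableSpace (Iic i × Ω) := Subtype.instMeasurableSpace.prod (ℱ i)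
  -- `X` on `Iic i × Ω` is the limit of its values at the dyadic times above, capped at `i`
  have happrox : ∀ k, StronglyMeasurable[mprod] fun p => X (min i (dyadicCeil k p.1)) p.2 := by
    intro k
    let R : Set ℝ := range fun s : Iic i => min i (dyadicCeil k s)
    have : Countable R := (countable_range_min_dyadicCeil Subtype.val i k).to_subtype
    have hR : Measurable[Prod.instMeasurableSpace (m₁ := ℱ i)] fun q : Ω × R => X q.2 q.1 := by
      refine measurable_from_prod_countable_left fun r => ?_
      obtain ⟨s, hs⟩ := r.2
      exact ((hX r).mono (ℱ.mono (hs ▸ min_le_left _ _))).measurable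
    have hproj : Measurable[mprod, Prod.instMeasurableSpace (m₁ := ℱ i)]
        fun p : Iic i × Ω => (p.2, (⟨_, mem_range_self p.1⟩ : R)) :=
      measurable_snd.prodMk (measurable_const.min
        ((measurable_dyadicCeil k).comp (measurable_subtype_coe.comp measurable_fst))).subtype_mk
    exact (hR.comp hproj).stronglyMeasurable
  refine stronglyMeasurable_of_tendsto atTop happrox (tendsto_pi_nhds.2 fun p => ?_)
  exact (hrc p.2 p.1).tendsto.comp (tendsto_min_dyadicCeil p.1.2)

noncomputable def dyadicStop (τ : Ω → WithTop ℝ) (b : ℝ) (k : ℕ) (ω : Ω) : WithTop ℝ :=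
  ↑(min b (dyadicCeil k (τ ω).untopA))

section DyadicStop

variable {τ : Ω → WithTop ℝ} {b : ℝ}

lemma dyadicStop_le (k : ℕ) (ω : Ω) : dyadicStop τ b k ω ≤ b :=
  WithTop.coe_le_coe.2 (min_le_left _ _)

lemma le_dyadicStop (hτb : ∀ ω, τ ω ≤ b) (k : ℕ) (ω : Ω) : τ ω ≤ dyadicStop τ b k ω := by
  rw [dyadicStop, ← WithTop.untopA_le_iff (ne_top_of_le_ne_top WithTop.coe_ne_top (hτb ω))]
  exact le_min (WithTop.untopA_le (hτb ω)) (le_dyadicCeil k _)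

lemma countable_range_dyadicStop (τ : Ω → WithTop ℝ) (b : ℝ) (k : ℕ) :
    (range (dyadicStop τ b k)).Countable := by
  rw [← image_univ, show dyadicStop τ b k = WithTop.some ∘ fun ω => _ from rfl, image_comp,
    image_univ]
  exact (countable_range_min_dyadicCeil _ b k).image _

lemma isStoppingTime_dyadicStop (hτ : IsStoppingTime ℱ τ) (hτb : ∀ ω, τ ω ≤ b) (k : ℕ) :
    IsStoppingTime ℱ (dyadicStop τ b k) := by
  intro v
  by_cases hbv : b ≤ v
  · convert MeasurableSet.univ
    exact eq_univ_of_forall fun ω => (dyadicStop_le k ω).trans (WithTop.coe_le_coe.2 hbv)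
  · have : {ω | dyadicStop τ b k ω ≤ v} = {ω | τ ω ≤ ↑((⌊v * 2 ^ k⌋ : ℝ) / 2 ^ k)} := by
      ext ω
      simp [dyadicStop, hbv, dyadicCeil_le_iff,
        ← WithTop.untopA_le_iff (ne_top_of_le_ne_top WithTop.coe_ne_top (hτb ω))]
    rw [this]
    exact ℱ.mono (floor_mul_two_pow_div_le k v) _ (hτ _)

lemma tendsto_stoppedValue_dyadicStop {X : ℝ → Ω → ℝ}
    (hrc : ∀ ω t, ContinuousWithinAt (X · ω) (Ici t) t) (hτb : ∀ ω, τ ω ≤ b) (ω : Ω) :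
    Tendsto (fun k => stoppedValue X (dyadicStop τ b k) ω) atTop (𝓝 (stoppedValue X τ ω)) := by
  simp only [stoppedValue, dyadicStop, WithTop.untopD_coe]
  exact (hrc ω _).tendsto.comp (tendsto_min_dyadicCeil (WithTop.untopA_le (hτb ω)))

end DyadicStop

lemma stoppedProcess_eq_add_stoppedValue_sub {G : Type*} [AddCommGroup G] (X : ℝ → Ω → G)
    (ρ : Ω → WithTop ℝ) {s t : ℝ} (hst : s ≤ t) (ω : Ω) :
    stoppedProcess X ρ t ω =
      stoppedProcess X ρ s ω + (stoppedValue X (fun ω => min (max (ρ ω) s) t) ω - X s ω) := by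
  simp only [stoppedProcess, stoppedValue]
  cases ρ ω with
  | top => simp
  | coe r =>
    simp only [← WithTop.coe_max, ← WithTop.coe_min, WithTop.untopD_coe]
    rcases le_total r s with hrs | hsr
    · rw [min_eq_right (hrs.trans hst), min_eq_right hrs, max_eq_right hrs, min_eq_left hst]
      abel
    · rw [min_eq_left hsr, max_eq_left hsr, min_comm]
      abel

namespace Martingale

variable [IsFiniteMeasure μ] {X : ℝ → Ω → ℝ} {b : ℝ}

theorem stoppedValue_ae_eq_condExp_of_le_const_of_rightContinuous (hX : Martingale X ℱ μ)
    (hrc : ∀ ω t, ContinuousWithinAt (X · ω) (Ici t) t) (hint : Integrable (X b) μ)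
    {τ : Ω → WithTop ℝ} (hτ : IsStoppingTime ℱ τ) (hτb : ∀ ω, τ ω ≤ b) :
    stoppedValue X τ =ᵐ[μ] μ[X b | hτ.measurableSpace] := by
  have hρ := isStoppingTime_dyadicStop hτ hτb
  have hρ_eq k : stoppedValue X (dyadicStop τ b k) =ᵐ[μ] μ[X b | (hρ k).measurableSpace] :=
    hX.stoppedValue_ae_eq_condExp_of_le_const_of_countable_range (hρ k) (dyadicStop_le k)
      (countable_range_dyadicStop τ b k)
  have hUI : UniformIntegrable (fun k => stoppedValue X (dyadicStop τ b k)) 1 μ :=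
    (hint.uniformIntegrable_condExp fun k => (hρ k).measurableSpace_le).ae_eq
      fun k => (hρ_eq k).symm
  have hlim := ae_of_all μ (tendsto_stoppedValue_dyadicStop hrc hτb)
  have hint_τ : Integrable (stoppedValue X τ) μ := hUI.integrable_of_ae_tendsto hlim
  refine ae_eq_condExp_of_forall_setIntegral_eq hτ.measurableSpace_le hint
    (fun _ _ _ => hint_τ.integrableOn) (fun A hA _ => ?_) ?_
  · have hset k : ∫ ω in A, stoppedValue X (dyadicStop τ b k) ω ∂μ = ∫ ω in A, X b ω ∂μ := by
      have hAk := hτ.measurableSpace_mono (hρ k) (le_dyadicStop hτb k) A hA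
      rw [setIntegral_congr_ae ((hρ k).measurableSpace_le A hAk) ((hρ_eq k).mono fun _ h _ => h)]
      exact setIntegral_condExp (hρ k).measurableSpace_le hint hAk
    have hconv := tendsto_setIntegral_of_L1' _ hint_τ.1
      (Eventually.of_forall fun k => memLp_one_iff_integrable.1 (hUI.memLp k))
      (hUI.tendsto_eLpNorm_sub_of_ae_tendsto le_rfl ENNReal.one_ne_top hlim) A
    simp only [hset] at hconv
    exact tendsto_nhds_unique hconv tendsto_const_nhds
  · exact (measurable_stoppedValue
      (hX.stronglyAdapted.isStronglyProgressive_of_rightContinuous hrc) hτ).stronglyMeasurable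
      |>.aestronglyMeasurable

theorem integrable_stoppedValue_of_rightContinuous (hX : Martingale X ℱ μ)
    (hrc : ∀ ω t, ContinuousWithinAt (X · ω) (Ici t) t) (hint : Integrable (X b) μ)
    {τ : Ω → WithTop ℝ} (hτ : IsStoppingTime ℱ τ) (hτb : ∀ ω, τ ω ≤ b) :
    Integrable (stoppedValue X τ) μ :=
  integrable_condExp.congr
    (hX.stoppedValue_ae_eq_condExp_of_le_const_of_rightContinuous hrc hint hτ hτb).symm

theorem uniformIntegrable_stoppedValue_of_rightContinuous (hX : Martingale X ℱ μ)
    (hrc : ∀ ω t, ContinuousWithinAt (X · ω) (Ici t) t) (hint : Integrable (X b) μ)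
    {κ : Type*} {τ : κ → Ω → WithTop ℝ} (hτ : ∀ i, IsStoppingTime ℱ (τ i))
    (hτb : ∀ i ω, τ i ω ≤ b) :
    UniformIntegrable (fun i => stoppedValue X (τ i)) 1 μ :=
  (hint.uniformIntegrable_condExp fun i => (hτ i).measurableSpace_le).ae_eq fun i =>
    (hX.stoppedValue_ae_eq_condExp_of_le_const_of_rightContinuous hrc hint (hτ i) (hτb i)).symm

theorem condExp_stoppedValue_ae_eq_of_const_le (hX : Martingale X ℱ μ)
    (hrc : ∀ ω t, ContinuousWithinAt (X · ω) (Ici t) t) {s t : ℝ} (hst : s ≤ t)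
    (hint : Integrable (X t) μ)
    {σ : Ω → WithTop ℝ} (hσ : IsStoppingTime ℱ σ) (hsσ : ∀ ω, s ≤ σ ω) (hσt : ∀ ω, σ ω ≤ t) :
    μ[stoppedValue X σ | ℱ s] =ᵐ[μ] X s := calc
  μ[stoppedValue X σ | ℱ s] =ᵐ[μ] μ[μ[X t | hσ.measurableSpace] | ℱ s] :=
    condExp_congr_ae (hX.stoppedValue_ae_eq_condExp_of_le_const_of_rightContinuous hrc hint hσ hσt)
  _ =ᵐ[μ] μ[X t | ℱ s] :=
    condExp_condExp_of_le (hσ.le_measurableSpace_of_const_le hsσ) hσ.measurableSpace_le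
  _ =ᵐ[μ] X s := hX.condExp_ae_eq hst

theorem stoppedProcess_of_rightContinuous (hX : Martingale X ℱ μ)
    (hrc : ∀ ω t, ContinuousWithinAt (X · ω) (Ici t) t) (hint : ∀ t, Integrable (X t) μ)
    {ρ : Ω → WithTop ℝ} (hρ : IsStoppingTime ℱ ρ) : Martingale (stoppedProcess X ρ) ℱ μ := by
  have hadapted := IsStronglyProgressive.stronglyAdapted_stoppedProcess
    (hX.stronglyAdapted.isStronglyProgressive_of_rightContinuous hrc) hρ
  refine ⟨hadapted, fun s t hst => ?_⟩
  have hint_stop : Integrable (stoppedProcess X ρ s) μ :=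
    hX.integrable_stoppedValue_of_rightContinuous hrc (hint s) ((isStoppingTime_const ℱ s).min hρ)
      fun _ => min_le_left _ _
  let σ : Ω → WithTop ℝ := fun ω => min (max (ρ ω) s) t
  have hσ : IsStoppingTime ℱ σ := (hρ.max_const s).min_const t
  have hσt : ∀ ω, σ ω ≤ t := fun _ => min_le_right _ _
  have hint_σ := hX.integrable_stoppedValue_of_rightContinuous hrc (hint t) hσ hσt
  have hcond_σ := hX.condExp_stoppedValue_ae_eq_of_const_le hrc hst (hint t) hσ
    (fun _ => le_min (le_max_right _ _) (WithTop.coe_le_coe.2 hst)) hσt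
  have hcond_stop : μ[stoppedProcess X ρ s | ℱ s] = stoppedProcess X ρ s :=
    condExp_of_stronglyMeasurable (ℱ.le s) (hadapted s) hint_stop
  have hcond_s : μ[X s | ℱ s] = X s :=
    condExp_of_stronglyMeasurable (ℱ.le s) (hX.stronglyAdapted s) (hint s)
  rw [show stoppedProcess X ρ t = stoppedProcess X ρ s + (stoppedValue X σ - X s) from
    funext (stoppedProcess_eq_add_stoppedValue_sub X ρ hst)]
  filter_upwards [condExp_add hint_stop (hint_σ.sub (hint s)) (ℱ s),
    condExp_sub hint_σ (hint s) (ℱ s), hcond_σ] with ω h_add h_sub h_σ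
  simp [h_add, h_sub, h_σ, hcond_stop, hcond_s]

end Martingale

end RightContinuous

section Limit

variable [IsFiniteMeasure μ] {ι : Type*} [Preorder ι] {ℱ : Filtration ι m} {N : ℕ → ι → Ω → ℝ}
  {L : ι → Ω → ℝ}

theorem Martingale.ae_eq_condExp_of_tendsto (hN : ∀ n, Martingale (N n) ℱ μ)
    (hNint : ∀ n t, Integrable (N n t) μ) (hlim : ∀ t ω, Tendsto (N · t ω) atTop (𝓝 (L t ω)))
    {s T : ι} (hsT : s ≤ T) (hLT : Integrable (L T) μ)
    (hL1 : Tendsto (fun n => eLpNorm (N n T - L T) 1 μ) atTop (𝓝 0)) :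
    L s =ᵐ[μ] μ[L T | ℱ s] := by
  have hcontract n : eLpNorm (N n s - μ[L T | ℱ s]) 1 μ ≤ eLpNorm (N n T - L T) 1 μ := by
    have h : N n s - μ[L T | ℱ s] =ᵐ[μ] μ[N n T - L T | ℱ s] := by
      filter_upwards [(hN n).condExp_ae_eq hsT, condExp_sub (hNint n T) hLT (ℱ s)] with ω h1 h2
      simp [h1, h2]
    rw [eLpNorm_congr_ae h]
    exact eLpNorm_condExp_le_eLpNorm _ le_rfl
  refine (ae_eq_of_tendsto_eLpNorm_of_ae_tendsto one_ne_zero (fun n => (hNint n s).1)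
    integrable_condExp.1 ?_ (ae_of_all μ (hlim s))).symm
  exact tendsto_of_tendsto_of_tendsto_of_le_of_le tendsto_const_nhds hL1 (fun _ => zero_le)
    hcontract

theorem Martingale.of_tendsto (hN : ∀ n, Martingale (N n) ℱ μ)
    (hNint : ∀ n t, Integrable (N n t) μ) (hlim : ∀ t ω, Tendsto (N · t ω) atTop (𝓝 (L t ω)))
    (hL1 : ∀ t, ∃ T, t ≤ T ∧ Integrable (L T) μ ∧
      Tendsto (fun n => eLpNorm (N n T - L T) 1 μ) atTop (𝓝 0)) :
    Martingale L ℱ μ ∧ ∀ t, Integrable (L t) μ := by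
  have hcond (t : ι) : ∃ T, t ≤ T ∧ ∀ s ≤ T, L s =ᵐ[μ] μ[L T | ℱ s] := by
    obtain ⟨T, htT, hLT, hconv⟩ := hL1 t
    exact ⟨T, htT, fun s hsT => Martingale.ae_eq_condExp_of_tendsto hN hNint hlim hsT hLT hconv⟩
  refine ⟨⟨fun t => stronglyMeasurable_of_tendsto atTop (fun n => (hN n).stronglyAdapted t)
    (tendsto_pi_nhds.2 (hlim t)), fun s t hst => ?_⟩, fun t => ?_⟩
  · obtain ⟨T, htT, hT⟩ := hcond t
    calc μ[L t | ℱ s] =ᵐ[μ] μ[μ[L T | ℱ t] | ℱ s] := condExp_congr_ae (hT t htT)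
      _ =ᵐ[μ] μ[L T | ℱ s] := condExp_condExp_of_le (ℱ.mono hst) (ℱ.le t)
      _ =ᵐ[μ] L s := (hT s (hst.trans htT)).symm
  · obtain ⟨T, htT, hT⟩ := hcond t
    exact integrable_condExp.congr (hT t htT).symm

end Limit

end MeasureTheory

namespace EReal

/-- The identity of `(-∞, ∞]`, viewed in `WithTop ℝ`; `⊥` is sent to the junk value `0`. -/
noncomputable def toWithTop (x : EReal) : WithTop ℝ := if x = ⊤ then ⊤ else (x.toReal : WithTop ℝ)

variable {x : EReal}

lemma toWithTop_le_coe_iff (hx : x ≠ ⊥) {v : ℝ} : x.toWithTop ≤ v ↔ x ≤ v := by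
  induction x using EReal.rec with
  | bot => exact absurd rfl hx
  | coe r => simp [toWithTop]
  | top => simp [toWithTop]

lemma coe_le_toWithTop_iff (hx : x ≠ ⊥) {v : ℝ} :
    (v : WithTop ℝ) ≤ x.toWithTop ↔ (v : EReal) ≤ x := by
  induction x using EReal.rec with
  | bot => exact absurd rfl hx
  | coe r => simp [toWithTop]
  | top => simp [toWithTop]

lemma untopA_min_toWithTop (hx : x ≠ ⊥) (t : ℝ) :
    (min (t : WithTop ℝ) x.toWithTop).untopA = (min (t : EReal) x).toReal := by
  induction x using EReal.rec with
  | bot => exact absurd rfl hx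
  | coe r =>
    rw [← EReal.coe_strictMono.monotone.map_min, EReal.toReal_coe]
    simp only [toWithTop, EReal.coe_ne_top, if_false, EReal.toReal_coe, ← WithTop.coe_min,
      WithTop.untopD_coe]
  | top => simp [toWithTop]

lemma eventually_max_eq (hx : x ≠ ⊥) : ∀ᶠ c : ℝ in atBot, max x c = x := by
  obtain ⟨r, hr⟩ := EReal.exists_between_coe_real (bot_lt_iff_ne_bot.2 hx)
  filter_upwards [eventually_le_atBot r] with c hc
  exact max_eq_left ((EReal.coe_le_coe_iff.2 hc).trans hr.2.le)

end EReal

section IncrementMartingale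

variable {Ω : Type*} {m : MeasurableSpace Ω}

lemma IsStoppingTimeE.max_const {ℱ : Filtration ℝ m} {τ : Ω → EReal} (hτ : IsStoppingTimeE ℱ τ)
    (c : ℝ) : IsStoppingTimeE ℱ fun ω => max (τ ω) c := by
  intro v
  simp only [max_le_iff, ofPred_and]
  exact (hτ v).inter (MeasurableSet.const _)

lemma IsStoppingTimeE.isStoppingTime_toWithTop {ℱ : Filtration ℝ m} {τ : Ω → EReal}
    (hτ : IsStoppingTimeE ℱ τ) (hbot : ∀ ω, τ ω ≠ ⊥) :
    IsStoppingTime ℱ fun ω => (τ ω).toWithTop := by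
  intro v
  simp only [EReal.toWithTop_le_coe_iff (hbot _)]
  exact hτ v

variable {μ : Measure Ω} {ℱ : Filtration ℝ m} {M : ℝ → Ω → ℝ}

lemma continuousWithinAt_incr (hM : ∀ ω, Cadlag fun t => M t ω) (c : ℝ) (ω : Ω) (t : ℝ) :
    ContinuousWithinAt (fun u => incr M c u ω) (Ici t) t := by
  have hmin : ContinuousWithinAt (fun u => M (min u c) ω) (Ici t) t :=
    ContinuousWithinAt.comp (g := (M · ω)) ((hM ω).1 (min t c))
      (continuous_id.min continuous_const).continuousWithinAt
      fun _ (hu : t ≤ _) => show min t c ≤ _ from min_le_min_right c hu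
  exact ((hM ω).1 t).sub hmin

lemma sub_stoppedProcess_eq_incr {σ : Ω → WithTop ℝ} {c : ℝ} (hcσ : ∀ ω, (c : WithTop ℝ) ≤ σ ω) :
    (fun t ω => M t ω - stoppedProcess M σ t ω) = incr M c - stoppedProcess (incr M c) σ := by
  ext t ω
  simp only [Pi.sub_apply, incr, stoppedProcess]
  cases hσω : σ ω with
  | top => simp
  | coe r =>
    have hcr : c ≤ r := WithTop.coe_le_coe.1 (hσω ▸ hcσ ω)
    simp only [← WithTop.coe_min, WithTop.untopD_coe]
    rw [min_assoc, min_eq_right hcr]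
    ring

lemma sub_stoppedProcess_eq_add (σ : Ω → WithTop ℝ) {c t : ℝ} (hct : c ≤ t) (ω : Ω) :
    M t ω - stoppedProcess M σ t ω = (M c ω - stoppedProcess M σ c ω) +
      (incr M c t ω - stoppedProcess (incr M c) σ t ω) := by
  simp only [incr, stoppedProcess]
  cases σ ω with
  | top => simp
  | coe r =>
    simp only [← WithTop.coe_min, WithTop.untopD_coe]
    rw [min_eq_right hct, min_right_comm, min_eq_right hct]
    ring

variable [IsFiniteMeasure μ]

theorem IsIncMart.isMart_sub_stoppedProcess (hM : IsIncMart ℱ μ M) {σ : Ω → WithTop ℝ}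
    (hσ : IsStoppingTime ℱ σ) {c : ℝ} (hcσ : ∀ ω, (c : WithTop ℝ) ≤ σ ω) :
    IsMart ℱ μ fun t ω => M t ω - stoppedProcess M σ t ω := by
  obtain ⟨hX, hint⟩ := hM.2 c
  have hrc := continuousWithinAt_incr hM.1 c
  rw [sub_stoppedProcess_eq_incr hcσ]
  exact ⟨hX.sub (hX.stoppedProcess_of_rightContinuous hrc hint hσ), fun t => (hint t).sub
    (hX.integrable_stoppedValue_of_rightContinuous hrc (hint t)
      ((isStoppingTime_const ℱ t).min hσ) fun _ => min_le_left _ _)⟩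

theorem IsIncMart.uniformIntegrable_sub_stoppedProcess (hM : IsIncMart ℱ μ M)
    {σ : ℕ → Ω → WithTop ℝ} (hσ : ∀ n, IsStoppingTime ℱ (σ n)) {c t : ℝ} (hct : c ≤ t)
    (hui : UniformIntegrable (fun n ω => M c ω - stoppedProcess M (σ n) c ω) 1 μ) :
    UniformIntegrable (fun n ω => M t ω - stoppedProcess M (σ n) t ω) 1 μ := by
  obtain ⟨hX, hint⟩ := hM.2 c
  have hstopped := hX.uniformIntegrable_stoppedValue_of_rightContinuous
    (continuousWithinAt_incr hM.1 c) (hint t)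
    (fun n => (isStoppingTime_const ℱ t).min (hσ n)) fun _ _ => min_le_left _ _
  have hconst := uniformIntegrable_const (ι := ℕ) le_rfl ENNReal.one_ne_top
    (memLp_one_iff_integrable.2 (hint t))
  convert hui.add (hconst.sub hstopped le_rfl) le_rfl using 1
  ext n ω
  exact sub_stoppedProcess_eq_add (σ n) hct ω

end IncrementMartingale

theorem stmt1_general {Ω : Type*} {m : MeasurableSpace Ω} {μ : Measure Ω} [IsProbabilityMeasure μ]
    (ℱ : Filtration ℝ m)
    (M : ℝ → Ω → ℝ) (hM : IsIncMart ℱ μ M)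
    (τ : Ω → EReal) (hτ : IsStoppingTimeE ℱ τ) (hbot : ∀ ω, τ ω ≠ ⊥)
    (hui : UniformIntegrable
      (fun n : ℕ => fun ω =>
        M 0 ω - M ((min (0 : EReal) (max (τ ω) ((-(n + 1 : ℝ) : ℝ) : EReal))).toReal) ω)
      1 μ) :
    IsMart ℱ μ fun t ω => M t ω - stoppedE M τ t ω := by
  set c : ℕ → ℝ := fun n => -(n + 1 : ℝ)
  have hc : Tendsto c atTop atBot :=
    tendsto_neg_atTop_atBot.comp (tendsto_atTop_add_const_right _ 1 tendsto_natCast_atTop_atTop)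
  have hne n ω : max (τ ω) (c n) ≠ ⊥ := ne_bot_of_le_ne_bot (EReal.coe_ne_bot _) (le_max_right _ _)
  let σ : ℕ → Ω → WithTop ℝ := fun n ω => (max (τ ω) (c n)).toWithTop
  have hσ n : IsStoppingTime ℱ (σ n) := (hτ.max_const (c n)).isStoppingTime_toWithTop (hne n)
  have hcσ n ω : (c n : WithTop ℝ) ≤ σ n ω :=
    (EReal.coe_le_toWithTop_iff (hne n ω)).2 (le_max_right _ _)
  have hstop n t ω :
      stoppedProcess M (σ n) t ω = M (min (t : EReal) (max (τ ω) (c n))).toReal ω := by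
    simp only [stoppedProcess, σ, EReal.untopA_min_toWithTop (hne n ω)]
  have hlim t ω : Tendsto (fun n => M t ω - stoppedProcess M (σ n) t ω) atTop
      (𝓝 (M t ω - stoppedE M τ t ω)) := by
    refine tendsto_const_nhds.congr' ?_
    filter_upwards [hc.eventually (EReal.eventually_max_eq (hbot ω))] with n hn
    rw [hstop, hn, stoppedE]
  have hui0 : UniformIntegrable (fun n ω => M 0 ω - stoppedProcess M (σ n) 0 ω) 1 μ := by
    convert hui using 4 with n ω
    rw [hstop, EReal.coe_zero]
  have hN n := hM.isMart_sub_stoppedProcess (hσ n) (hcσ n)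
  refine Martingale.of_tendsto (fun n => (hN n).1) (fun n => (hN n).2) hlim
    fun t => ⟨max t 0, le_max_left _ _, ?_⟩
  have hUI := hM.uniformIntegrable_sub_stoppedProcess hσ (le_max_right t 0) hui0
  exact ⟨hUI.integrable_of_ae_tendsto (ae_of_all _ (hlim _)),
    hUI.tendsto_eLpNorm_sub_of_ae_tendsto le_rfl ENNReal.one_ne_top (ae_of_all _ (hlim _))⟩

/-- if `M` is an increment martingale, `τ` a stopping time and the family
`{M_0 - M_{(τ ∨ (-n)) ∧ 0} : n ≥ 1}` is uniformly integrable, then `(M_t - M_{t∧τ})_t`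
is a martingale. -/
theorem stmt1 {Ω : Type*} {m : MeasurableSpace Ω} {μ : Measure Ω} [IsProbabilityMeasure μ]
    (ℱ : Filtration ℝ m) (hrc : RightContinuousFiltration ℱ) (hcpl : CompleteFiltration ℱ μ)
    (M : ℝ → Ω → ℝ) (hM : IsIncMart ℱ μ M)
    (τ : Ω → EReal) (hτ : IsStoppingTimeE ℱ τ) (hbot : ∀ ω, τ ω ≠ ⊥)
    (hui : UniformIntegrable
      (fun n : ℕ => fun ω =>
        M 0 ω - M ((min (0 : EReal) (max (τ ω) ((-(n + 1 : ℝ) : ℝ) : EReal))).toReal) ω)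
      1 μ) :
    IsMart ℱ μ fun t ω => M t ω - stoppedE M τ t ω :=
  stmt1_general ℱ M hM τ hτ hbot hui
end

section
/- For a càdlàg process M = (M_t)_{t∈ℝ}, the following are equivalent: (c) M_{−∞} := lim_{s→−∞} M_s exists a.s. and (M_t − M_{−∞})_t is a square integrable martingale; (d) M is an increment square integrable martingale and sup_{s≤0} E[(M_0 − M_s)²] < ∞. -/
open MeasureTheory Filter Set

/-!
(c) ⇒ (d): the increments of `M` are those of the square integrable martingale
`N = M - M_{-∞}`, and orthogonality of martingale increments gives
`E[(N_0 - N_s)²] = E[N_0²] - E[N_s²] ≤ E[N_0²]`.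

(d) ⇒ (c): by orthogonality of increments, `φ(s) = E[(M_0 - M_s)²]` is antitone and bounded,
hence converges to some `L` as `s → -∞`, and `E[(M_s - M_{s₀})²] = φ(s₀) - φ(s) ≤ L - φ(s)`
is small uniformly in `s₀ ≤ s`. Doob's L² maximal inequality on finite sets of rationals,
together with right-continuity of the paths, turns this into almost sure convergence of `M_s`
as `s → -∞`. Fatou's lemma upgrades it to L² convergence, which carries the martingale property
of the increments over to `M - M_{-∞}`; completeness of the filtration makes the a.s. limit
adapted.
-/

open scoped ENNReal Topology

section Orthogonality

variable {Ω : Type*} {m mΩ : MeasurableSpace Ω} {μ : Measure Ω}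

theorem MeasureTheory.MemLp.eLpNorm_two_eq {f : Ω → ℝ} (hf : MemLp f 2 μ) :
    eLpNorm f 2 μ = ENNReal.ofReal √(∫ ω, f ω ^ 2 ∂μ) := by
  rw [hf.eLpNorm_eq_integral_rpow_norm two_ne_zero ENNReal.ofNat_ne_top]
  simp [Real.sqrt_eq_rpow]

variable [IsFiniteMeasure μ]

theorem integral_mul_eq_zero_of_condExp_eq_zero (hm : m ≤ mΩ)
    {X Y : Ω → ℝ} (hX : MemLp X 2 μ) (hY : MemLp Y 2 μ) (hXm : StronglyMeasurable[m] X)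
    (hY0 : μ[Y|m] =ᵐ[μ] 0) : ∫ ω, X ω * Y ω ∂μ = 0 := by
  have hXY : Integrable (X * Y) μ := hX.integrable_mul hY
  calc ∫ ω, X ω * Y ω ∂μ = ∫ ω, (μ[X * Y|m]) ω ∂μ := (integral_condExp hm).symm
    _ = 0 := integral_eq_zero_of_ae <| by
      filter_upwards [condExp_mul_of_stronglyMeasurable_left hXm hXY (hY.integrable one_le_two),
        hY0] with ω hXY hY
      simp [hXY, hY]

theorem integral_add_sq_of_condExp_eq_zero (hm : m ≤ mΩ)
    {X Y : Ω → ℝ} (hX : MemLp X 2 μ) (hY : MemLp Y 2 μ) (hXm : StronglyMeasurable[m] X)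
    (hY0 : μ[Y|m] =ᵐ[μ] 0) :
    ∫ ω, (X ω + Y ω) ^ 2 ∂μ = ∫ ω, X ω ^ 2 ∂μ + ∫ ω, Y ω ^ 2 ∂μ := by
  have hXY : Integrable (fun ω => 2 * (X ω * Y ω)) μ := (hX.integrable_mul hY).const_mul 2
  have hsq : Integrable (fun ω => X ω ^ 2 + Y ω ^ 2) μ := hX.integrable_sq.add hY.integrable_sq
  calc ∫ ω, (X ω + Y ω) ^ 2 ∂μ = ∫ ω, (X ω ^ 2 + Y ω ^ 2 + 2 * (X ω * Y ω)) ∂μ := by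
        congr with ω; ring
    _ = ∫ ω, X ω ^ 2 ∂μ + ∫ ω, Y ω ^ 2 ∂μ := by
        rw [integral_add hsq hXY,
          integral_add hX.integrable_sq hY.integrable_sq, integral_const_mul,
          integral_mul_eq_zero_of_condExp_eq_zero hm hX hY hXm hY0, mul_zero, add_zero]

end Orthogonality

section Limits

variable {Ω : Type*} {m mΩ : MeasurableSpace Ω} {μ : Measure Ω}

theorem measurable_of_tendsto_ae_of_forall_null (hm : m ≤ mΩ)
    (hnull : ∀ s, μ s = 0 → MeasurableSet[m] s) {f : ℕ → Ω → ℝ} {g : Ω → ℝ}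
    (hf : ∀ n, Measurable[m] (f n)) (hlim : ∀ᵐ ω ∂μ, Tendsto (fun n => f n ω) atTop (𝓝 (g ω))) :
    Measurable[m] g := by
  have : (μ.trim hm).IsComplete := Measure.isComplete_iff.2 fun s hs =>
    hnull s (le_antisymm ((le_trim hm).trans hs.le) zero_le)
  refine @measurable_of_tendsto_metrizable_ae Ω ℝ m _ _ _ _ (μ.trim hm) this f g hf ?_
  have hbad := ae_iff.1 hlim
  rwa [ae_iff, trim_measurableSet_eq hm (hnull _ hbad)]

theorem eLpNorm_le_of_tendsto_ae {f : ℕ → Ω → ℝ} {g : Ω → ℝ} {p c : ℝ≥0∞}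
    (hf : ∀ n, AEStronglyMeasurable (f n) μ)
    (hlim : ∀ᵐ ω ∂μ, Tendsto (fun n => f n ω) atTop (𝓝 (g ω)))
    (hc : ∀ n, eLpNorm (f n) p μ ≤ c) : eLpNorm g p μ ≤ c :=
  (Lp.eLpNorm_lim_le_liminf_eLpNorm hf g hlim).trans <|
    (liminf_le_liminf (Eventually.of_forall hc)).trans (liminf_const c).le

theorem condExp_ae_eq_of_tendsto_eLpNorm [IsFiniteMeasure μ] (hm : m ≤ mΩ) {p : ℝ≥0∞}
    (hp : 1 ≤ p) {f g : Ω → ℝ} {F G : ℕ → Ω → ℝ} (hf : Integrable f μ)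
    (hF : ∀ n, Integrable (F n) μ) (hg : AEStronglyMeasurable g μ)
    (hFG : ∀ n, μ[F n|m] =ᵐ[μ] G n)
    (hFf : Tendsto (fun n => eLpNorm (f - F n) p μ) atTop (𝓝 0))
    (hGg : Tendsto (fun n => eLpNorm (G n - g) p μ) atTop (𝓝 0)) :
    μ[f|m] =ᵐ[μ] g := by
  have hcond : AEStronglyMeasurable (μ[f|m]) μ :=
    (stronglyMeasurable_condExp.mono hm).aestronglyMeasurable
  have hbound : ∀ n, eLpNorm (μ[f|m] - g) p μ ≤ eLpNorm (f - F n) p μ + eLpNorm (G n - g) p μ := by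
    intro n
    have hsplit : μ[f|m] - g =ᵐ[μ] μ[f - F n|m] + (G n - g) := by
      filter_upwards [condExp_sub hf (hF n) m, hFG n] with ω h1 h2
      simp only [Pi.add_apply, Pi.sub_apply] at h1 h2 ⊢
      rw [h1, h2]; ring
    calc eLpNorm (μ[f|m] - g) p μ = eLpNorm (μ[f - F n|m] + (G n - g)) p μ :=
          eLpNorm_congr_ae hsplit
      _ ≤ eLpNorm (μ[f - F n|m]) p μ + eLpNorm (G n - g) p μ :=
        eLpNorm_add_le ((stronglyMeasurable_condExp.mono hm).aestronglyMeasurable)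
          (((stronglyMeasurable_condExp.mono hm).aestronglyMeasurable.congr (hFG n)).sub hg) hp
      _ ≤ eLpNorm (f - F n) p μ + eLpNorm (G n - g) p μ := by
        gcongr; exact eLpNorm_condExp_le_eLpNorm _ hp
  have hzero : eLpNorm (μ[f|m] - g) p μ = 0 :=
    le_antisymm (ge_of_tendsto (by simpa using hFf.add hGg) (Eventually.of_forall hbound)) zero_le
  filter_upwards [(eLpNorm_eq_zero_iff (hcond.sub hg) (one_pos.trans_le hp).ne').1 hzero] with ω hω
  exact sub_eq_zero.1 hω

end Limits

section FirstPassage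

variable {ι α : Type*} [LinearOrder ι]

theorem setOf_exists_mem_eq_biUnion_first (F : Finset ι) (P : ι → α → Prop) :
    {a | ∃ i ∈ F, P i a} = ⋃ i ∈ F, {a | P i a ∧ ∀ j ∈ F, j < i → ¬P j a} := by
  classical
  ext a
  simp only [Set.mem_ofPred_eq, Set.mem_iUnion, exists_prop]
  constructor
  · rintro ⟨i, hi, hPi⟩
    obtain ⟨k, hk, hmin⟩ :=
      (F.filter (P · a)).exists_min_image id ⟨i, Finset.mem_filter.2 ⟨hi, hPi⟩⟩
    rw [Finset.mem_filter] at hk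
    exact ⟨k, hk.1, hk.2, fun j hj hjk hPj => (hmin j (Finset.mem_filter.2 ⟨hj, hPj⟩)).not_gt hjk⟩
  · rintro ⟨i, hi, hPi, -⟩
    exact ⟨i, hi, hPi⟩

theorem pairwiseDisjoint_first (F : Finset ι) (P : ι → α → Prop) :
    (F : Set ι).PairwiseDisjoint fun i => {a | P i a ∧ ∀ j ∈ F, j < i → ¬P j a} := by
  intro i hi j hj hij
  refine Set.disjoint_left.2 fun a ha hb => ?_
  rcases hij.lt_or_gt with h | h
  · exact hb.2 i hi h ha.1
  · exact ha.2 j hj h hb.1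

end FirstPassage

section Martingale

variable {Ω ι : Type*} {mΩ : MeasurableSpace Ω} {μ : Measure Ω} [IsFiniteMeasure μ]

theorem MeasureTheory.Martingale.setIntegral_sq_le [Preorder ι] {ℱ : Filtration ι mΩ}
    {N : ι → Ω → ℝ} (hN : Martingale N ℱ μ) (hL2 : ∀ i, MemLp (N i) 2 μ) {i j : ι} (hij : i ≤ j)
    {A : Set Ω} (hA : MeasurableSet[ℱ i] A) : ∫ ω in A, N i ω ^ 2 ∂μ ≤ ∫ ω in A, N j ω ^ 2 ∂μ := by
  have hAm : MeasurableSet A := ℱ.le i A hA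
  have hsq : ∀ f : Ω → ℝ, ∫ ω, A.indicator f ω ^ 2 ∂μ = ∫ ω in A, f ω ^ 2 ∂μ := fun f => by
    rw [← integral_indicator hAm]
    congr with ω
    by_cases hω : ω ∈ A <;> simp [hω]
  have hincr : μ[N j - N i|ℱ i] =ᵐ[μ] 0 := by
    filter_upwards [condExp_sub (hN.integrable j) (hN.integrable i) (ℱ i), hN.condExp_ae_eq hij]
      with ω h1 h2
    rw [h1, Pi.sub_apply, h2,
      condExp_of_stronglyMeasurable (ℱ.le i) (hN.stronglyMeasurable i) (hN.integrable i)]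
    simp
  have hincrA : μ[A.indicator (N j - N i)|ℱ i] =ᵐ[μ] 0 := by
    filter_upwards [condExp_indicator ((hN.integrable j).sub (hN.integrable i)) hA, hincr]
      with ω h1 h2
    by_cases hω : ω ∈ A <;> simp [h1, h2, hω]
  have hpyth := integral_add_sq_of_condExp_eq_zero (ℱ.le i) ((hL2 i).indicator hAm)
    (((hL2 j).sub (hL2 i)).indicator hAm) ((hN.stronglyMeasurable i).indicator hA) hincrA
  have hsum : ∀ ω, A.indicator (N i) ω + A.indicator (N j - N i) ω = A.indicator (N j) ω := by
    intro ω; by_cases hω : ω ∈ A <;> simp [hω]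
  simp only [hsum, hsq] at hpyth
  rw [hpyth, le_add_iff_nonneg_right]
  exact setIntegral_nonneg hAm fun ω _ => sq_nonneg _

theorem MeasureTheory.Martingale.mul_measureReal_exists_abs_ge_le [LinearOrder ι]
    {ℱ : Filtration ι mΩ} {N : ι → Ω → ℝ} (hN : Martingale N ℱ μ) (hL2 : ∀ i, MemLp (N i) 2 μ)
    {δ : ℝ} (hδ : 0 ≤ δ) {F : Finset ι} {b : ι} (hFb : ∀ i ∈ F, i ≤ b) :
    δ ^ 2 * μ.real {ω | ∃ i ∈ F, δ ≤ |N i ω|} ≤ ∫ ω, N b ω ^ 2 ∂μ := by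
  set A : ι → Set Ω := fun i => {ω | δ ≤ |N i ω| ∧ ∀ j ∈ F, j < i → ¬δ ≤ |N j ω|}
  have hAF : ∀ i, MeasurableSet[ℱ i] (A i) := by
    intro i
    have hlarge : ∀ j ≤ i, MeasurableSet[ℱ i] {ω | δ ≤ |N j ω|} := fun j hj =>
      (continuous_abs.measurable.comp ((hN.stronglyMeasurable j).mono (ℱ.mono hj)).measurable)
        measurableSet_Ici
    have hA_eq : A i = {ω | δ ≤ |N i ω|} ∩ ⋂ j ∈ F.filter (· < i), {ω | δ ≤ |N j ω|}ᶜ := by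
      ext ω; simp [A]
    rw [hA_eq]
    exact (hlarge i le_rfl).inter <| .biInter (Finset.countable_toSet _) fun j hj =>
      (hlarge j (Finset.mem_filter.1 hj).2.le).compl
  have hA : ∀ i, MeasurableSet (A i) := fun i => ℱ.le i _ (hAF i)
  have hdisj := pairwiseDisjoint_first F fun i ω => δ ≤ |N i ω|
  calc δ ^ 2 * μ.real {ω | ∃ i ∈ F, δ ≤ |N i ω|}
      = ∑ i ∈ F, δ ^ 2 * μ.real (A i) := by
        rw [setOf_exists_mem_eq_biUnion_first, measureReal_biUnion_finset hdisj fun i _ => hA i,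
          Finset.mul_sum]
    _ ≤ ∑ i ∈ F, ∫ ω in A i, N b ω ^ 2 ∂μ := by
        refine Finset.sum_le_sum fun i hi => ?_
        calc δ ^ 2 * μ.real (A i) = ∫ _ in A i, δ ^ 2 ∂μ := by
              rw [setIntegral_const, smul_eq_mul, mul_comm]
          _ ≤ ∫ ω in A i, N i ω ^ 2 ∂μ :=
              setIntegral_mono_on (integrableOn_const (measure_ne_top _ _))
                (hL2 i).integrable_sq.integrableOn (hA i) fun ω hω => by
                  simpa using pow_le_pow_left₀ hδ hω.1 2
          _ ≤ ∫ ω in A i, N b ω ^ 2 ∂μ := hN.setIntegral_sq_le hL2 (hFb i hi) (hAF i)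
    _ = ∫ ω in ⋃ i ∈ F, A i, N b ω ^ 2 ∂μ :=
        (integral_biUnion_finset F (fun i _ => hA i) hdisj
          fun i _ => (hL2 b).integrable_sq.integrableOn).symm
    _ ≤ ∫ ω, N b ω ^ 2 ∂μ :=
        setIntegral_le_integral (hL2 b).integrable_sq (Eventually.of_forall fun ω => sq_nonneg _)

theorem MeasureTheory.Martingale.comp_min [LinearOrder ι] {ℱ : Filtration ι mΩ} {N : ι → Ω → ℝ}
    (hN : Martingale N ℱ μ) (s : ι) : Martingale (fun t => N (min t s)) ℱ μ := by
  refine ⟨fun t => (hN.stronglyMeasurable _).mono (ℱ.mono (min_le_left t s)), fun u t hut => ?_⟩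
  change μ[N (min t s)|ℱ u] =ᵐ[μ] N (min u s)
  rcases le_total s u with hsu | hus
  · rw [min_eq_right (hsu.trans hut), min_eq_right hsu, condExp_of_stronglyMeasurable (ℱ.le u)
      ((hN.stronglyMeasurable s).mono (ℱ.mono hsu)) (hN.integrable s)]
  · rw [min_eq_left hus]
    exact hN.condExp_ae_eq (le_min hut hus)

end Martingale

section Increments

theorem tendsto_min_neg_natCast_atBot (t : ℝ) :
    Tendsto (fun n : ℕ => min t (-(n : ℝ))) atTop atBot :=
  tendsto_atBot_mono (fun _ => min_le_right _ _)
    (tendsto_neg_atTop_atBot.comp tendsto_natCast_atTop_atTop)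

variable {Ω : Type*} {mΩ : MeasurableSpace Ω} {μ : Measure Ω} {ℱ : Filtration ℝ mΩ}
  {M : ℝ → Ω → ℝ}

theorem incr_of_le {s t : ℝ} (h : s ≤ t) : incr M s t = fun ω => M t ω - M s ω := by
  funext ω; simp [incr, min_eq_right h]

theorem incr_of_ge {s t : ℝ} (h : t ≤ s) : incr M s t = 0 := by
  funext ω; simp [incr, min_eq_left h]

theorem incr_sub_right (Z : Ω → ℝ) (s : ℝ) : incr (fun t ω => M t ω - Z ω) s = incr M s := by
  funext t ω; simp only [incr, sub_sub_sub_cancel_right]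

theorem condExp_incr_ae_eq_zero {s t : ℝ} (hM : Martingale (incr M s) ℱ μ) (h : s ≤ t) :
    μ[incr M s t|ℱ s] =ᵐ[μ] 0 := by
  simpa [incr_of_ge (le_refl s)] using hM.condExp_ae_eq h

theorem tendsto_incr_of_tendsto_atBot {ω : Ω} {z : ℝ}
    (hz : Tendsto (fun s => M s ω) atBot (𝓝 z)) (t : ℝ) :
    Tendsto (fun n : ℕ => incr M (min t (-(n : ℝ))) t ω) atTop (𝓝 (M t ω - z)) := by
  simp only [incr_of_le, min_le_left]
  exact tendsto_const_nhds.sub (hz.comp (tendsto_min_neg_natCast_atBot t))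

variable [IsFiniteMeasure μ]

theorem MeasureTheory.Martingale.incr (hM : Martingale M ℱ μ) (s : ℝ) :
    Martingale (incr M s) ℱ μ :=
  hM.sub (hM.comp_min s)

theorem IsSqMart.incr (hM : IsSqMart ℱ μ M) (s : ℝ) : IsSqMart ℱ μ (incr M s) :=
  ⟨⟨hM.1.1.incr s, fun t => (hM.1.2 t).sub (hM.1.2 _)⟩, fun t => (hM.2 t).sub (hM.2 _)⟩

theorem IsSqMart.integral_sq_sub_le (hM : IsSqMart ℱ μ M) {s t : ℝ} (hst : s ≤ t) :
    ∫ ω, (M t ω - M s ω) ^ 2 ∂μ ≤ ∫ ω, M t ω ^ 2 ∂μ := by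
  have hY0 := condExp_incr_ae_eq_zero (hM.1.1.incr s) hst
  rw [incr_of_le hst] at hY0
  have hpyth := integral_add_sq_of_condExp_eq_zero (ℱ.le s) (hM.2 s) ((hM.2 t).sub (hM.2 s))
    (hM.1.1.stronglyMeasurable s) hY0
  simp only [Pi.sub_apply, add_sub_cancel] at hpyth
  have hs : 0 ≤ ∫ ω, M s ω ^ 2 ∂μ := integral_nonneg fun ω => sq_nonneg _
  linarith

variable (hmart : ∀ s, Martingale (incr M s) ℱ μ) (hL2 : ∀ s t, MemLp (incr M s t) 2 μ)
include hmart hL2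

theorem integral_sq_incr_add {s s' t : ℝ} (h₁ : s ≤ s') (h₂ : s' ≤ t) :
    ∫ ω, incr M s t ω ^ 2 ∂μ = ∫ ω, incr M s s' ω ^ 2 ∂μ + ∫ ω, incr M s' t ω ^ 2 ∂μ := by
  have hsplit : ∀ ω, incr M s t ω = incr M s s' ω + incr M s' t ω := fun ω => by
    simp only [incr_of_le h₁, incr_of_le h₂, incr_of_le (h₁.trans h₂)]; ring
  simp_rw [hsplit]
  exact integral_add_sq_of_condExp_eq_zero (ℱ.le s') (hL2 s s') (hL2 s' t)
    ((hmart s).stronglyMeasurable s') (condExp_incr_ae_eq_zero (hmart s') h₂)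

theorem antitone_integral_sq_incr (t : ℝ) : Antitone fun s => ∫ ω, incr M s t ω ^ 2 ∂μ := by
  intro s s' hss'
  rcases le_total s' t with hs't | hts'
  · simp only [integral_sq_incr_add hmart hL2 hss' hs't, le_add_iff_nonneg_left]
    exact integral_nonneg fun ω => sq_nonneg _
  · calc ∫ ω, incr M s' t ω ^ 2 ∂μ = 0 := by simp [incr_of_ge hts']
      _ ≤ ∫ ω, incr M s t ω ^ 2 ∂μ := integral_nonneg fun ω => sq_nonneg _

theorem exists_integral_sq_incr_le {t C : ℝ} (hC : ∀ s ≤ t, ∫ ω, incr M s t ω ^ 2 ∂μ ≤ C) :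
    ∃ K : ℝ → ℝ, Tendsto K atBot (𝓝 0) ∧
      ∀ s₀ s, s₀ ≤ s → s ≤ t → ∫ ω, incr M s₀ s ω ^ 2 ∂μ ≤ K s := by
  set φ := fun s => ∫ ω, incr M s t ω ^ 2 ∂μ
  have hφ : Antitone φ := antitone_integral_sq_incr hmart hL2 t
  have hbdd : BddAbove (Set.range φ) := ⟨C, by
    rintro _ ⟨s, rfl⟩
    exact (hφ (min_le_left s t)).trans (hC _ (min_le_right s t))⟩
  refine ⟨fun s => (⨆ s', φ s') - φ s, by
    simpa using (tendsto_atBot_ciSup hφ hbdd).const_sub (⨆ s', φ s'),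
    fun s₀ s hs₀ hs => ?_⟩
  have := integral_sq_incr_add hmart hL2 hs₀ hs
  linarith [le_ciSup hbdd s₀]

end Increments

section Convergence

theorem exists_rat_btwn_lt_of_continuousWithinAt {g : ℝ → ℝ} {s a c : ℝ}
    (hg : ContinuousWithinAt g (Ici s) s) (hsa : s < a) (hc : c < g s) :
    ∃ q : ℚ, s < q ∧ (q : ℝ) < a ∧ c < g q := by
  have hev : ∀ᶠ x in 𝓝[>] s, c < g x ∧ x < a :=
    ((hg.mono Ioi_subset_Ici_self).eventually (eventually_gt_nhds hc)).and
      (eventually_nhdsWithin_of_eventually_nhds (eventually_lt_nhds hsa))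
  obtain ⟨u, hu, hsub⟩ := mem_nhdsGT_iff_exists_Ioo_subset.1 hev
  obtain ⟨q, hsq, hqu⟩ := exists_rat_btwn (mem_Ioi.1 hu)
  exact ⟨q, hsq, (hsub ⟨hsq, hqu⟩).2, (hsub ⟨hsq, hqu⟩).1⟩

theorem exists_rat_abs_sub_gt {f : ℝ → ℝ} (hf : ∀ t, ContinuousWithinAt f (Ici t) t)
    {s s' a ε : ℝ} (hs : s < a) (hs' : s' < a) (h : ε < |f s - f s'|) :
    ∃ q q' : ℚ, (q : ℝ) < a ∧ (q' : ℝ) < a ∧ ε < |f q - f q'| := by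
  obtain ⟨q, -, hq, hgt⟩ := exists_rat_btwn_lt_of_continuousWithinAt
    (g := fun x => |f x - f s'|) ((hf s).sub continuousWithinAt_const).abs hs h
  obtain ⟨q', -, hq', hgt'⟩ := exists_rat_btwn_lt_of_continuousWithinAt
    (g := fun x => |f q - f x|) (continuousWithinAt_const.sub (hf s')).abs hs' hgt
  exact ⟨q, q', hq, hq', hgt'⟩

theorem exists_tendsto_atBot_of_forall_abs_sub_le {f : ℝ → ℝ}
    (h : ∀ ε > 0, ∃ a, ∀ s s', s < a → s' < a → |f s - f s'| ≤ ε) :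
    ∃ z, Tendsto f atBot (𝓝 z) := by
  refine cauchy_map_iff_exists_tendsto.1 (Metric.cauchy_iff.2 ⟨inferInstance, fun ε hε => ?_⟩)
  obtain ⟨a, ha⟩ := h (ε / 2) (half_pos hε)
  refine ⟨f '' Iio a, image_mem_map (Iio_mem_atBot a), ?_⟩
  rintro _ ⟨s, hs, rfl⟩ _ ⟨s', hs', rfl⟩
  rw [Real.dist_eq]
  linarith [ha s s' hs hs']

variable {Ω : Type*} {mΩ : MeasurableSpace Ω} {μ : Measure Ω} [IsFiniteMeasure μ]
  {ℱ : Filtration ℝ mΩ} {M : ℝ → Ω → ℝ}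
  (hmart : ∀ s, Martingale (incr M s) ℱ μ) (hL2 : ∀ s t, MemLp (incr M s t) 2 μ)
include hmart hL2

theorem measure_exists_rat_abs_sub_gt_le {a ε K : ℝ} (hε : 0 < ε)
    (hK : ∀ s ≤ a, ∫ ω, incr M s a ω ^ 2 ∂μ ≤ K) :
    μ {ω | ∃ q q' : ℚ, (q : ℝ) ≤ a ∧ (q' : ℝ) ≤ a ∧ ε < |M q ω - M q' ω|}
      ≤ ENNReal.ofReal (K / (ε / 2) ^ 2) := by
  set D : Finset ℚ → Set Ω := fun G =>
    {ω | ∃ q ∈ G, ∃ q' ∈ G, (q : ℝ) ≤ a ∧ (q' : ℝ) ≤ a ∧ ε < |M q ω - M q' ω|}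
  have hunion : {ω | ∃ q q' : ℚ, (q : ℝ) ≤ a ∧ (q' : ℝ) ≤ a ∧ ε < |M q ω - M q' ω|}
      = ⋃ G, D G := by
    ext ω
    simp only [D, Set.mem_ofPred_eq, Set.mem_iUnion]
    constructor
    · rintro ⟨q, q', hrest⟩
      exact ⟨{q, q'}, q, by simp, q', by simp, hrest⟩
    · rintro ⟨G, q, -, q', -, hrest⟩
      exact ⟨q, q', hrest⟩
  have hD : Monotone D := fun G G' hG ω ⟨q, hq, q', hq', hrest⟩ => ⟨q, hG hq, q', hG hq', hrest⟩
  rw [hunion, hD.measure_iUnion]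
  refine iSup_le fun G => ?_
  -- compare every `M q`, `q ∈ G`, with `M s` for one `s` below `G`, and apply Doob to `incr M s`
  obtain ⟨s₀, hs₀⟩ := (G.image ((↑) : ℚ → ℝ)).bddBelow
  set s := min s₀ a
  have hsG : ∀ q ∈ G, s ≤ q := fun q hq =>
    (min_le_left _ _).trans (hs₀ (Finset.mem_coe.2 (Finset.mem_image_of_mem _ hq)))
  set F := (G.image ((↑) : ℚ → ℝ)).filter (· ≤ a)
  have hsub : D G ⊆ {ω | ∃ x ∈ F, ε / 2 ≤ |incr M s x ω|} := by
    rintro ω ⟨q, hq, q', hq', hqa, hq'a, hgt⟩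
    by_contra hnot
    have hsmall : ∀ x ∈ F, |incr M s x ω| < ε / 2 := fun x hx => not_le.1 fun h => hnot ⟨x, hx, h⟩
    have h₁ := hsmall q (by simp [F, hq, hqa])
    have h₂ := hsmall q' (by simp [F, hq', hq'a])
    rw [incr_of_le (hsG q hq)] at h₁
    rw [incr_of_le (hsG q' hq')] at h₂
    obtain ⟨h₁l, h₁r⟩ := abs_lt.1 h₁
    obtain ⟨h₂l, h₂r⟩ := abs_lt.1 h₂
    rcases lt_abs.1 hgt with h | h <;> linarith
  have hdoob := (hmart s).mul_measureReal_exists_abs_ge_le (hL2 s) (half_pos hε).le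
    (F := F) (b := a) fun x hx => (Finset.mem_filter.1 hx).2
  refine (measure_mono hsub).trans ?_
  rw [← ofReal_measureReal (measure_ne_top _ _)]
  refine ENNReal.ofReal_le_ofReal ((le_div_iff₀ (by positivity)).2 ?_)
  linarith [hK s (min_le_right _ _)]

theorem ae_exists_forall_abs_sub_le (hcad : ∀ ω t, ContinuousWithinAt (fun u => M u ω) (Ici t) t)
    {t : ℝ} {K : ℝ → ℝ} (hK₀ : Tendsto K atBot (𝓝 0))
    (hK : ∀ s₀ s, s₀ ≤ s → s ≤ t → ∫ ω, incr M s₀ s ω ^ 2 ∂μ ≤ K s) {ε : ℝ} (hε : 0 < ε) :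
    ∀ᵐ ω ∂μ, ∃ a, ∀ s s', s < a → s' < a → |M s ω - M s' ω| ≤ ε := by
  rw [ae_iff]
  push Not
  set B := {ω | ∀ a, ∃ s s', s < a ∧ s' < a ∧ ε < |M s ω - M s' ω|}
  have hB : ∀ a ≤ t, μ B ≤ ENNReal.ofReal (K a / (ε / 2) ^ 2) := by
    intro a ha
    refine (measure_mono fun ω hω => ?_).trans
      (measure_exists_rat_abs_sub_gt_le hmart hL2 hε fun s hs => hK s a hs ha)
    obtain ⟨s, s', hs, hs', hgt⟩ := hω a
    obtain ⟨q, q', hq, hq', hgt'⟩ := exists_rat_abs_sub_gt (hcad ω) hs hs' hgt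
    exact ⟨q, q', hq.le, hq'.le, hgt'⟩
  have hlim : Tendsto (fun a => ENNReal.ofReal (K a / (ε / 2) ^ 2)) atBot (𝓝 0) := by
    simpa using ENNReal.tendsto_ofReal (hK₀.div_const ((ε / 2) ^ 2))
  exact le_antisymm (ge_of_tendsto hlim ((eventually_le_atBot t).mono hB)) zero_le

theorem ae_exists_tendsto_atBot (hcad : ∀ ω t, ContinuousWithinAt (fun u => M u ω) (Ici t) t)
    {t : ℝ} {K : ℝ → ℝ} (hK₀ : Tendsto K atBot (𝓝 0))
    (hK : ∀ s₀ s, s₀ ≤ s → s ≤ t → ∫ ω, incr M s₀ s ω ^ 2 ∂μ ≤ K s) :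
    ∀ᵐ ω ∂μ, ∃ z, Tendsto (fun s => M s ω) atBot (𝓝 z) := by
  have hosc := ae_all_iff.2 fun k : ℕ =>
    ae_exists_forall_abs_sub_le hmart hL2 hcad hK₀ hK (Nat.one_div_pos_of_nat (n := k))
  filter_upwards [hosc] with ω hω
  refine exists_tendsto_atBot_of_forall_abs_sub_le fun ε hε => ?_
  obtain ⟨k, hk⟩ := exists_nat_one_div_lt hε
  obtain ⟨a, ha⟩ := hω k
  exact ⟨a, fun s s' hs hs' => (ha s s' hs hs').trans hk.le⟩

end Convergence

section Limit

variable {Ω : Type*} {mΩ : MeasurableSpace Ω} {μ : Measure Ω} [IsFiniteMeasure μ]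
  {ℱ : Filtration ℝ mΩ} {M : ℝ → Ω → ℝ} {Z : Ω → ℝ}
  (hmart : ∀ s, Martingale (incr M s) ℱ μ) (hL2 : ∀ s t, MemLp (incr M s t) 2 μ)
include hmart hL2

theorem isSqMart_sub_of_tendsto_atBot (hcpl : CompleteFiltration ℱ μ) {b : ℝ} {K : ℝ → ℝ}
    (hK₀ : Tendsto K atBot (𝓝 0))
    (hK : ∀ s₀ s, s₀ ≤ s → s ≤ b → ∫ ω, incr M s₀ s ω ^ 2 ∂μ ≤ K s)
    (hZ : ∀ᵐ ω ∂μ, Tendsto (fun s => M s ω) atBot (𝓝 (Z ω))) :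
    IsSqMart ℱ μ fun t ω => M t ω - Z ω := by
  have hadapt : ∀ t, StronglyMeasurable[ℱ t] fun ω => M t ω - Z ω := fun t =>
    (measurable_of_tendsto_ae_of_forall_null (ℱ.le t) (hcpl t)
      (fun n => ((hmart _).stronglyMeasurable t).measurable)
      (hZ.mono fun ω hω => tendsto_incr_of_tendsto_atBot hω t)).stronglyMeasurable
  have hnorm : ∀ s ≤ b, eLpNorm (fun ω => M s ω - Z ω) 2 μ ≤ ENNReal.ofReal √(K s) := by
    intro s hs
    refine eLpNorm_le_of_tendsto_ae (fun n => (hL2 _ s).aestronglyMeasurable)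
      (hZ.mono fun ω hω => tendsto_incr_of_tendsto_atBot hω s) fun n => ?_
    rw [(hL2 _ _).eLpNorm_two_eq]
    exact ENNReal.ofReal_le_ofReal (Real.sqrt_le_sqrt (hK _ _ (min_le_left _ _) hs))
  have hL2Z : ∀ t, MemLp (fun ω => M t ω - Z ω) 2 μ := by
    intro t
    have hb : MemLp (fun ω => M (min t b) ω - Z ω) 2 μ :=
      ⟨((hadapt _).mono (ℱ.le _)).aestronglyMeasurable,
        (hnorm _ (min_le_right t b)).trans_lt ENNReal.ofReal_lt_top⟩
    convert (hL2 (min t b) t).add hb using 1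
    funext ω
    simp only [incr_of_le (min_le_left t b), Pi.add_apply]
    ring
  have hto0 : Tendsto (fun s => eLpNorm (fun ω => M s ω - Z ω) 2 μ) atBot (𝓝 0) := by
    have hup : Tendsto (fun s => ENNReal.ofReal √(K s)) atBot (𝓝 0) := by
      simpa [Function.comp_def] using (ENNReal.continuous_ofReal.tendsto _).comp
        ((Real.continuous_sqrt.tendsto 0).comp hK₀)
    exact tendsto_of_tendsto_of_tendsto_of_le_of_le' tendsto_const_nhds hup
      (Eventually.of_forall fun _ => zero_le) ((eventually_le_atBot b).mono hnorm)
  refine ⟨⟨⟨hadapt, fun u t hut => ?_⟩, fun t => (hL2Z t).integrable one_le_two⟩, hL2Z⟩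
  -- pass to the limit `n → ∞` in `μ[incr M sₙ t|ℱ u] = incr M sₙ u`, where `sₙ = min u (-n)`
  have hsn := hto0.comp (tendsto_min_neg_natCast_atBot u)
  refine condExp_ae_eq_of_tendsto_eLpNorm (ℱ.le u) one_le_two
    (F := fun n => incr M (min u (-(n : ℝ))) t) (G := fun n => incr M (min u (-(n : ℝ))) u)
    ((hL2Z t).integrable one_le_two) (fun n => (hL2 _ _).integrable one_le_two)
    (hL2Z u).aestronglyMeasurable (fun n => (hmart _).condExp_ae_eq hut)
    (hsn.congr fun n => ?_) (hsn.congr fun n => ?_)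
  · dsimp only [Function.comp_apply]
    congr 1
    funext ω
    simp only [Pi.sub_apply, incr_of_le ((min_le_left u _).trans hut)]
    ring
  · rw [Function.comp_apply, ← eLpNorm_neg]
    congr 1
    funext ω
    simp only [Pi.sub_apply, Pi.neg_apply, incr_of_le (min_le_left u _)]
    ring

end Limit

theorem stmt7_general {Ω : Type*} {m : MeasurableSpace Ω} {μ : Measure Ω} [IsProbabilityMeasure μ]
    (ℱ : Filtration ℝ m) (hcpl : CompleteFiltration ℱ μ)
    (M : ℝ → Ω → ℝ) (hcad : ∀ ω, Cadlag fun t => M t ω) :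
    (∃ Z : Ω → ℝ, (∀ᵐ ω ∂μ, Tendsto (fun s => M s ω) atBot (nhds (Z ω))) ∧
        IsSqMart ℱ μ fun t ω => M t ω - Z ω) ↔
      (IsIncSqMart ℱ μ M ∧
        ∃ C : ℝ, ∀ s : ℝ, s ≤ 0 → ∫ ω, (M 0 ω - M s ω) ^ 2 ∂μ ≤ C) := by
  constructor
  · rintro ⟨Z, -, hMZ⟩
    refine ⟨⟨hcad, fun s => incr_sub_right Z s ▸ hMZ.incr s⟩,
      ∫ ω, (M 0 ω - Z ω) ^ 2 ∂μ, fun s hs => ?_⟩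
    simpa only [sub_sub_sub_cancel_right] using hMZ.integral_sq_sub_le hs
  · rintro ⟨⟨-, hM⟩, C, hC⟩
    have hmart := fun s => (hM s).1.1
    have hL2 := fun s => (hM s).2
    obtain ⟨K, hK₀, hK⟩ := exists_integral_sq_incr_le hmart hL2 (t := 0) (C := C)
      fun s hs => by simpa only [incr_of_le hs] using hC s hs
    have hZ : ∀ᵐ ω ∂μ, Tendsto (fun s => M s ω) atBot (𝓝 (limUnder atBot fun s => M s ω)) :=
      (ae_exists_tendsto_atBot hmart hL2 (fun ω => (hcad ω).1) hK₀ hK).mono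
        fun ω => tendsto_nhds_limUnder
    exact ⟨_, hZ, isSqMart_sub_of_tendsto_atBot hmart hL2 hcpl hK₀ hK hZ⟩

/-- for a càdlàg process `M`, the following are equivalent:
(c) `M_{-∞}` exists a.s. and `(M_t - M_{-∞})_t` is a square integrable martingale;
(d) `M` is an increment square integrable martingale and `sup_{s≤0} E[(M_0 - M_s)²] < ∞`. -/
theorem stmt7 {Ω : Type*} {m : MeasurableSpace Ω} {μ : Measure Ω} [IsProbabilityMeasure μ]
    (ℱ : Filtration ℝ m) (hrc : RightContinuousFiltration ℱ) (hcpl : CompleteFiltration ℱ μ)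
    (M : ℝ → Ω → ℝ) (hcad : ∀ ω, Cadlag fun t => M t ω) :
    (∃ Z : Ω → ℝ, (∀ᵐ ω ∂μ, Tendsto (fun s => M s ω) atBot (nhds (Z ω))) ∧
        IsSqMart ℱ μ fun t ω => M t ω - Z ω) ↔
      (IsIncSqMart ℱ μ M ∧
        ∃ C : ℝ, ∀ s : ℝ, s ≤ 0 → ∫ ω, (M 0 ω - M s ω) ^ 2 ∂μ ≤ C) :=
  stmt7_general ℱ hcpl M hcad
end

section
/- Let I = { (s,I)_{s∈ℝ} } be a consistent family of increment processes: each ˢI is adapted càdlàg with ˢI_t = 0 a.s. for t ≤ s, and ˢI_t + ᵗI_u = ˢI_u a.s. for s ≤ t ≤ u. Then there exists a càdlàg process X = (X_t)_{t∈ℝ} with X_t − X_{t∧s} = ˢI_t (up to indistinguishability in t) for every s; moreover any two such processes differ by a single random variable a.s. -/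
open MeasureTheory Filter Set

/-!
On `[-n, -n + 1)` (and on `[0, ∞)` for `n = 0`) put `X_t = ⁻ⁿI_t - ∑_{k<n} ⁻⁽ᵏ⁺¹⁾I_{-k}`.
Each piece is càdlàg and the pieces switch at integers, so `X` is càdlàg; splitting at the anchors
and telescoping with the consistency relation gives `X_b - X_a = ᵃI_b` a.s. for each `a ≤ b`.
Two associated processes satisfy `X_t - Y_t = X_0 - Y_0` a.s. for each `t`. In both parts the
a.s. identities for fixed times hold simultaneously for all times because the paths are
right-continuous and are therefore determined by their values on the rationals.
-/

open Topology

section RightContinuous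

variable {α β : Type*} [TopologicalSpace α] [LinearOrder α] [OrderTopology α]
  [TopologicalSpace β]

theorem eq_of_continuousWithinAt_Ici_of_eqOn_dense [DenselyOrdered α] [NoMaxOrder α] [T2Space β]
    {f g : α → β} {D : Set α} (hD : Dense D) (hf : ∀ t, ContinuousWithinAt f (Ici t) t)
    (hg : ∀ t, ContinuousWithinAt g (Ici t) t) (hfg : EqOn f g D) : f = g := by
  funext t
  have hsub : Ioi t ∩ D ⊆ Ici t := fun _ hu => le_of_lt hu.1
  have : (𝓝[Ioi t ∩ D] t).NeBot := by
    rw [← mem_closure_iff_nhdsWithin_neBot]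
    exact closure_minimal (hD.open_subset_closure_inter isOpen_Ioi) isClosed_closure
      (closure_Ioi t ▸ self_mem_Ici)
  exact tendsto_nhds_unique_of_eventuallyEq ((hf t).mono hsub).tendsto ((hg t).mono hsub).tendsto
    (mem_of_superset self_mem_nhdsWithin fun _ hu => hfg hu.2)

theorem ae_forall_eq_of_continuousWithinAt_Ici [DenselyOrdered α] [NoMaxOrder α]
    [TopologicalSpace.SeparableSpace α] [T2Space β] {Ω : Type*} {m : MeasurableSpace Ω}
    {μ : Measure Ω} {X Y : α → Ω → β} (hX : ∀ ω t, ContinuousWithinAt (X · ω) (Ici t) t)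
    (hY : ∀ ω t, ContinuousWithinAt (Y · ω) (Ici t) t) (hXY : ∀ t, ∀ᵐ ω ∂μ, X t ω = Y t ω) :
    ∀ᵐ ω ∂μ, ∀ t, X t ω = Y t ω := by
  obtain ⟨D, hDc, hD⟩ := TopologicalSpace.exists_countable_dense α
  filter_upwards [(ae_ball_iff hDc).2 fun t _ => hXY t] with ω hω t
  exact congrFun (eq_of_continuousWithinAt_Ici_of_eqOn_dense hD (hX ω) (hY ω) hω) t

theorem continuousWithinAt_Ici_sub_min [AddGroup β] [ContinuousSub β] {f : α → β}
    (hf : ∀ t, ContinuousWithinAt f (Ici t) t) (s t : α) :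
    ContinuousWithinAt (fun u => f u - f (min u s)) (Ici t) t :=
  (hf t).sub <| (hf (min t s)).comp (f := fun u => min u s)
    (continuous_id.min continuous_const).continuousWithinAt fun _ hu => min_le_min_right s hu

end RightContinuous

namespace Cadlag

theorem sub_const {f : ℝ → ℝ} (hf : Cadlag f) (c : ℝ) : Cadlag fun t => f t - c :=
  ⟨fun t => (hf.1 t).sub continuousWithinAt_const,
    fun t => let ⟨l, hl⟩ := hf.2 t; ⟨l - c, hl.sub_const c⟩⟩

theorem glue {ι : Type*} {f : ι → ℝ → ℝ} (hf : ∀ i, Cadlag (f i)) {n : ℝ → ι}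
    (hr : ∀ t, ∀ᶠ u in 𝓝[≥] t, n u = n t) (hl : ∀ t, ∃ i, ∀ᶠ u in 𝓝[<] t, n u = i) :
    Cadlag fun t => f (n t) t := by
  refine ⟨fun t => ((hf (n t)).1 t).congr_of_eventuallyEq ?_ rfl, fun t => ?_⟩
  · filter_upwards [hr t] with u hu
    rw [hu]
  · obtain ⟨i, hi⟩ := hl t
    obtain ⟨l, hfi⟩ := (hf i).2 t
    refine ⟨l, hfi.congr' ?_⟩
    filter_upwards [hi] with u hu
    rw [hu]

end Cadlag

/-- `-pieceIdx t = min ⌊t⌋ 0`. -/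
noncomputable def pieceIdx (t : ℝ) : ℕ := ⌈-t⌉₊

theorem neg_pieceIdx_le (t : ℝ) : -(pieceIdx t : ℝ) ≤ t := by
  have := Nat.le_ceil (-t)
  rw [pieceIdx]
  linarith

theorem pieceIdx_antitone : Antitone pieceIdx := fun _ _ h => Nat.ceil_mono (neg_le_neg h)

theorem pieceIdx_eq_toNat_neg_floor (t : ℝ) : pieceIdx t = (-⌊t⌋).toNat := by
  rw [pieceIdx, ← Int.ceil_toNat, Int.ceil_neg]

theorem eventually_pieceIdx_nhdsGE (t : ℝ) : ∀ᶠ u in 𝓝[≥] t, pieceIdx u = pieceIdx t := by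
  filter_upwards [tendsto_pure.1 (tendsto_floor_right_pure_floor t)] with u hu
  rw [pieceIdx_eq_toNat_neg_floor, pieceIdx_eq_toNat_neg_floor, hu]

theorem eventually_pieceIdx_nhdsLT (t : ℝ) :
    ∀ᶠ u in 𝓝[<] t, pieceIdx u = (-(⌈t⌉ - 1)).toNat := by
  filter_upwards [tendsto_pure.1 (tendsto_floor_left_pure_ceil_sub_one t)] with u hu
  rw [pieceIdx_eq_toNat_neg_floor, hu]

section Glue

variable {Ω : Type*} (I : ℝ → ℝ → Ω → ℝ)

noncomputable def unitIncrSum (n : ℕ) (ω : Ω) : ℝ := ∑ k ∈ Finset.range n, I (-(k + 1 : ℝ)) (-k) ω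

noncomputable def gluedProcess (t : ℝ) (ω : Ω) : ℝ := I (-(pieceIdx t : ℝ)) t ω - unitIncrSum I (pieceIdx t) ω

variable {I}

theorem cadlag_gluedProcess (hI : ∀ s ω, Cadlag fun t => I s t ω) (ω : Ω) :
    Cadlag fun t => gluedProcess I t ω :=
  Cadlag.glue (f := fun (n : ℕ) t => I (-(n : ℝ)) t ω - unitIncrSum I n ω) (n := pieceIdx)
    (fun _ => (hI _ ω).sub_const _) eventually_pieceIdx_nhdsGE
    fun t => ⟨_, eventually_pieceIdx_nhdsLT t⟩

variable {m : MeasurableSpace Ω} {μ : Measure Ω}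

theorem ae_incr_neg_nat_eq_unitIncrSum_sub
    (hzero : ∀ s t : ℝ, t ≤ s → ∀ᵐ ω ∂μ, I s t ω = 0)
    (hcons : ∀ s t u : ℝ, s ≤ t → t ≤ u → ∀ᵐ ω ∂μ, I s t ω + I t u ω = I s u ω)
    {k n : ℕ} (hkn : k ≤ n) :
    ∀ᵐ ω ∂μ, I (-(n : ℝ)) (-k) ω = unitIncrSum I n ω - unitIncrSum I k ω := by
  induction n, hkn using Nat.le_induction with
  | base =>
    filter_upwards [hzero _ _ le_rfl] with ω h
    rw [h, sub_self]
  | succ n hkn ih =>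
    have hkn' : (k : ℝ) ≤ n := by exact_mod_cast hkn
    filter_upwards [hcons (-(n + 1 : ℝ)) (-n) (-k) (by linarith) (by linarith), ih]
      with ω hsplit hn
    rw [unitIncrSum, Finset.sum_range_succ, ← unitIncrSum]
    push_cast
    linarith

theorem ae_gluedProcess_sub
    (hzero : ∀ s t : ℝ, t ≤ s → ∀ᵐ ω ∂μ, I s t ω = 0)
    (hcons : ∀ s t u : ℝ, s ≤ t → t ≤ u → ∀ᵐ ω ∂μ, I s t ω + I t u ω = I s u ω)
    {a b : ℝ} (hab : a ≤ b) :
    ∀ᵐ ω ∂μ, gluedProcess I b ω - gluedProcess I a ω = I a b ω := by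
  have hidx : (pieceIdx b : ℝ) ≤ pieceIdx a := by exact_mod_cast pieceIdx_antitone hab
  filter_upwards [hcons _ a b (neg_pieceIdx_le a) hab,
    hcons _ _ b (neg_le_neg hidx) (neg_pieceIdx_le b),
    ae_incr_neg_nat_eq_unitIncrSum_sub hzero hcons (pieceIdx_antitone hab)] with ω h₁ h₂ h₃
  rw [gluedProcess, gluedProcess]
  linarith

theorem ae_gluedProcess_sub_min
    (hzero : ∀ s t : ℝ, t ≤ s → ∀ᵐ ω ∂μ, I s t ω = 0)
    (hcons : ∀ s t u : ℝ, s ≤ t → t ≤ u → ∀ᵐ ω ∂μ, I s t ω + I t u ω = I s u ω) (s t : ℝ) :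
    ∀ᵐ ω ∂μ, gluedProcess I t ω - gluedProcess I (min t s) ω = I s t ω := by
  rcases le_or_gt t s with hts | hst
  · filter_upwards [hzero s t hts] with ω h
    rw [min_eq_left hts, h, sub_self]
  · filter_upwards [ae_gluedProcess_sub hzero hcons hst.le] with ω h
    rwa [min_eq_right hst.le]

end Glue

section Assoc

variable {Ω : Type*} {m : MeasurableSpace Ω} {μ : Measure Ω} {I : ℝ → ℝ → Ω → ℝ}
  {X Y : ℝ → Ω → ℝ}

theorem assoc_of_forall_ae (hX : ∀ ω t, ContinuousWithinAt (X · ω) (Ici t) t)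
    (hI : ∀ s ω t, ContinuousWithinAt (I s · ω) (Ici t) t)
    (h : ∀ s t, ∀ᵐ ω ∂μ, X t ω - X (min t s) ω = I s t ω) : Assoc μ I X := fun s =>
  ae_forall_eq_of_continuousWithinAt_Ici (fun ω => continuousWithinAt_Ici_sub_min (hX ω) s)
    (hI s) (h s)

theorem Assoc.ae_sub_eq (hX : Assoc μ I X) {a b : ℝ} (hab : a ≤ b) :
    ∀ᵐ ω ∂μ, X b ω - X a ω = I a b ω := by
  filter_upwards [hX a] with ω h
  simpa only [min_eq_right hab] using h b

theorem Assoc.ae_eq_add_sub (hX : Assoc μ I X) (hY : Assoc μ I Y) (t : ℝ) :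
    ∀ᵐ ω ∂μ, X t ω = Y t ω + (X 0 ω - Y 0 ω) := by
  rcases le_total t 0 with ht | ht
  · filter_upwards [hX.ae_sub_eq ht, hY.ae_sub_eq ht] with ω h₁ h₂
    linarith
  · filter_upwards [hX.ae_sub_eq ht, hY.ae_sub_eq ht] with ω h₁ h₂
    linarith

end Assoc

theorem stmt10_general {Ω : Type*} {m : MeasurableSpace Ω} {μ : Measure Ω}
    (I : ℝ → ℝ → Ω → ℝ)
    (hIcad : ∀ s ω, Cadlag fun t => I s t ω)
    (hzero : ∀ s t : ℝ, t ≤ s → ∀ᵐ ω ∂μ, I s t ω = 0)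
    (hcons : ∀ s t u : ℝ, s ≤ t → t ≤ u → ∀ᵐ ω ∂μ, I s t ω + I t u ω = I s u ω) :
    (∃ X : ℝ → Ω → ℝ, (∀ ω, Cadlag fun t => X t ω) ∧ Assoc μ I X) ∧
      ∀ X Y : ℝ → Ω → ℝ, (∀ ω, Cadlag fun t => X t ω) → (∀ ω, Cadlag fun t => Y t ω) →
        Assoc μ I X → Assoc μ I Y →
        ∃ Z : Ω → ℝ, ∀ᵐ ω ∂μ, ∀ t, X t ω = Y t ω + Z ω := by
  have hIrc : ∀ s ω t, ContinuousWithinAt (I s · ω) (Ici t) t := fun s ω => (hIcad s ω).1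
  refine ⟨⟨gluedProcess I, cadlag_gluedProcess hIcad, ?_⟩, fun X Y hXc hYc hX hY => ?_⟩
  · exact assoc_of_forall_ae (fun ω => (cadlag_gluedProcess hIcad ω).1) hIrc
      (ae_gluedProcess_sub_min hzero hcons)
  · exact ⟨fun ω => X 0 ω - Y 0 ω, ae_forall_eq_of_continuousWithinAt_Ici (fun ω => (hXc ω).1)
      (fun ω t => ((hYc ω).1 t).add continuousWithinAt_const) (hX.ae_eq_add_sub hY)⟩

/-- every consistent family of increment processes admits an associated
càdlàg process, unique up to addition of a single random variable. -/
theorem stmt10 {Ω : Type*} {m : MeasurableSpace Ω} {μ : Measure Ω} [IsProbabilityMeasure μ]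
    (ℱ : Filtration ℝ m) (hrc : RightContinuousFiltration ℱ) (hcpl : CompleteFiltration ℱ μ)
    (I : ℝ → ℝ → Ω → ℝ)
    (hadapt : ∀ s, Adapted ℱ (I s))
    (hIcad : ∀ s ω, Cadlag fun t => I s t ω)
    (hzero : ∀ s t : ℝ, t ≤ s → ∀ᵐ ω ∂μ, I s t ω = 0)
    (hcons : ∀ s t u : ℝ, s ≤ t → t ≤ u → ∀ᵐ ω ∂μ, I s t ω + I t u ω = I s u ω) :
    (∃ X : ℝ → Ω → ℝ, (∀ ω, Cadlag fun t => X t ω) ∧ Assoc μ I X) ∧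
      ∀ X Y : ℝ → Ω → ℝ, (∀ ω, Cadlag fun t => X t ω) → (∀ ω, Cadlag fun t => Y t ω) →
        Assoc μ I X → Assoc μ I Y →
        ∃ Z : Ω → ℝ, ∀ᵐ ω ∂μ, ∀ t, X t ω = Y t ω + Z ω :=
  stmt10_general (m := m) I hIcad hzero hcons
end

section
/- If X and Y are càdlàg processes indexed by ℝ with identical increments (for every s, the processes (X_t − X_{t∧s})_t and (Y_t − Y_{t∧s})_t are indistinguishable), then there exists a random variable Z such that X_t = Y_t + Z for all t ∈ ℝ almost surely. -/
open MeasureTheory Filter Set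

theorem sub_eq_sub_of_forall_sub_min_eq {f g : ℝ → ℝ} {s t : ℝ}
    (h : ∀ u, f u - f (min u s) = g u - g (min u s)) (hst : s ≤ t) :
    f t - g t = f s - g s := by
  have ht := h t
  rw [min_eq_right hst] at ht
  linarith

theorem stmt11_general {Ω : Type*} {m : MeasurableSpace Ω} {μ : Measure Ω}
    (X Y : ℝ → Ω → ℝ)
    (hinc : ∀ s : ℝ, ∀ᵐ ω ∂μ, ∀ t, X t ω - X (min t s) ω = Y t ω - Y (min t s) ω) :
    ∃ Z : Ω → ℝ, ∀ᵐ ω ∂μ, ∀ t, X t ω = Y t ω + Z ω := by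
  refine ⟨fun ω => X 0 ω - Y 0 ω, ?_⟩
  -- Only countably many starting points are needed: every time lies above some integer.
  have hcount : ∀ᵐ ω ∂μ, ∀ k : ℤ, ∀ t, X t ω - X (min t k) ω = Y t ω - Y (min t k) ω :=
    ae_all_iff.2 fun k => hinc k
  filter_upwards [hcount] with ω hω t
  have hk : ((⌊min t 0⌋ : ℤ) : ℝ) ≤ min t 0 := Int.floor_le _
  have hkt := sub_eq_sub_of_forall_sub_min_eq (hω ⌊min t 0⌋) (hk.trans (min_le_left _ _))
  have hk0 := sub_eq_sub_of_forall_sub_min_eq (hω ⌊min t 0⌋) (hk.trans (min_le_right _ _))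
  linarith

/-- two càdlàg processes with identical increments differ by a single
random variable almost surely. -/
theorem stmt11 {Ω : Type*} {m : MeasurableSpace Ω} {μ : Measure Ω} [IsProbabilityMeasure μ]
    (X Y : ℝ → Ω → ℝ)
    (hX : ∀ ω, Cadlag fun t => X t ω) (hY : ∀ ω, Cadlag fun t => Y t ω)
    (hinc : ∀ s : ℝ, ∀ᵐ ω ∂μ, ∀ t, X t ω - X (min t s) ω = Y t ω - Y (min t s) ω) :
    ∃ Z : Ω → ℝ, ∀ᵐ ω ∂μ, ∀ t, X t ω = Y t ω + Z ω :=
  stmt11_general (m := m) X Y hinc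
end

section
/- Let I be a consistent family of increment processes and X a càdlàg process associated with I such that X_{−∞} := lim_{t→−∞} X_t exists in probability. Then (X_t − X_{−∞})_{t∈ℝ} is adapted and associated with I; moreover it is the unique (up to indistinguishability) càdlàg process associated with I converging to 0 in probability at −∞. If in addition each ˢI is predictable, then (X_t − X_{−∞})_t is predictable. -/
open MeasureTheory Filter Set

/-! Choose `tₙ → -∞` with `X_{tₙ} → Z` almost surely (a subsequence of the convergence in
probability). Association gives `ᵗⁿI_u = X_u - X_{tₙ}` for `tₙ ≤ u`, so outside one null set
`ᵗⁿI_u → X_u - Z` for every `u`. Hence `X - Z` is an almost sure limit of adapted (resp.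
predictable) processes, which is enough by completeness of the filtration: on the null set,
right-continuity alone makes the process jointly measurable. Any `Y` associated with `I` and
vanishing at `-∞` satisfies `Y_u = lim ᵗⁿI_u` along a further subsequence, whence uniqueness. -/
open scoped Topology

section Completeness

variable {Ω : Type*} {m₀ m : MeasurableSpace Ω} {μ : Measure Ω}

lemma ae_trim_eq_ae_of_null (hle : m₀ ≤ m) (hnull : ∀ s, μ s = 0 → MeasurableSet[m₀] s) :
    ae (μ.trim hle) = ae μ := by
  ext s
  simp only [mem_ae_iff]
  refine ⟨fun h => nonpos_iff_eq_zero.1 ((le_trim hle).trans h.le), fun h => ?_⟩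
  rwa [trim_measurableSet_eq hle (hnull _ h)]

lemma isComplete_trim_of_null (hle : m₀ ≤ m) (hnull : ∀ s, μ s = 0 → MeasurableSet[m₀] s) :
    (μ.trim hle).IsComplete :=
  ⟨fun s hs => hnull s (nonpos_iff_eq_zero.1 ((le_trim hle).trans hs.le))⟩

lemma measurable_of_tendsto_ae_of_null {β : Type*} [TopologicalSpace β]
    [TopologicalSpace.PseudoMetrizableSpace β] [MeasurableSpace β] [BorelSpace β]
    (hle : m₀ ≤ m) (hnull : ∀ s, μ s = 0 → MeasurableSet[m₀] s)
    {f : ℕ → Ω → β} {g : Ω → β} (hf : ∀ n, Measurable[m₀] (f n))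
    (hfg : ∀ᵐ ω ∂μ, Tendsto (fun n => f n ω) atTop (𝓝 (g ω))) : Measurable[m₀] g := by
  have := isComplete_trim_of_null hle hnull
  exact @measurable_of_tendsto_metrizable_ae Ω β m₀ _ _ _ _ (μ.trim hle) this f g hf
    (by rwa [ae_trim_eq_ae_of_null hle hnull])

end Completeness

lemma measurable_uncurry_of_continuousWithinAt_Ici {Ω β : Type*} [MeasurableSpace Ω]
    [TopologicalSpace β] [TopologicalSpace.PseudoMetrizableSpace β] [MeasurableSpace β]
    [BorelSpace β] {Y : ℝ → Ω → β} (hY : ∀ u, Measurable (Y u))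
    (hrc : ∀ ω u, ContinuousWithinAt (Y · ω) (Ici u) u) :
    Measurable fun p : ℝ × Ω => Y p.1 p.2 := by
  set r : ℕ → ℝ → ℝ := fun n u => ⌈u * ((n : ℝ) + 1)⌉ / ((n : ℝ) + 1)
  have hr_mem : ∀ n u, u ≤ r n u ∧ r n u ≤ u + 1 / ((n : ℝ) + 1) := fun n u => by
    have hn : (0 : ℝ) < n + 1 := by positivity
    constructor
    · exact (le_div_iff₀ hn).2 (Int.le_ceil _)
    · rw [div_le_iff₀ hn, add_mul, one_div_mul_cancel hn.ne']
      exact (Int.ceil_lt_add_one _).le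
  have hr_tendsto : ∀ u, Tendsto (fun n => r n u) atTop (𝓝[≥] u) := fun u => by
    refine tendsto_nhdsWithin_iff.2 ⟨?_, .of_forall fun n => (hr_mem n u).1⟩
    have hupper : Tendsto (fun n : ℕ => u + 1 / ((n : ℝ) + 1)) atTop (𝓝 u) := by
      simpa only [add_zero] using
        (tendsto_const_nhds (x := u)).add tendsto_one_div_add_atTop_nhds_zero_nat
    exact tendsto_of_tendsto_of_tendsto_of_le_of_le tendsto_const_nhds hupper
      (fun n => (hr_mem n u).1) (fun n => (hr_mem n u).2)
  refine measurable_of_tendsto_metrizable (f := fun n p => Y (r n p.1) p.2) (fun n => ?_) ?_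
  · have hgrid : Measurable fun q : Ω × ℤ => Y (q.2 / (n + 1)) q.1 :=
      measurable_from_prod_countable_left fun k => hY ((k : ℝ) / ((n : ℝ) + 1))
    exact hgrid.comp (measurable_snd.prodMk
      (Int.measurable_ceil.comp (measurable_fst.mul_const _)))
  · exact tendsto_pi_nhds.2 fun p => (hrc p.2 p.1).tendsto.comp (hr_tendsto p.1)

section Predictable

variable {Ω : Type*} {m : MeasurableSpace Ω} {ℱ : Filtration ℝ m}

lemma measurableSet_predictableSigma_prod {B : Set ℝ} {C : Set Ω} (hB : MeasurableSet B)
    (hC : ∀ t, MeasurableSet[ℱ t] C) : MeasurableSet[predictableSigma ℱ] (B ×ˢ C) := by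
  have hcover : B ×ˢ C = ⋃ n : ℤ, (B ∩ Ioc (n : ℝ) (n + 1)) ×ˢ C := by
    rw [← iUnion_prod_const, ← inter_iUnion, iUnion_Ioc_intCast, inter_univ]
  rw [hcover]
  exact .iUnion fun n => MeasurableSpace.measurableSet_generateFrom
    ⟨n, _, C, inter_subset_right.trans Ioc_subset_Ioi_self, hB.inter measurableSet_Ioc,
      Metric.isBounded_Ioc _ _ |>.subset inter_subset_right, hC n, rfl⟩

lemma measurable_predictableSigma_indicator_univ_prod {N : Set Ω}
    (hN : ∀ t C, C ⊆ N → MeasurableSet[ℱ t] C) {β : Type*} [MeasurableSpace β] [Zero β]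
    {h : ℝ × Ω → β} (hh : Measurable[@Prod.instMeasurableSpace ℝ Ω _ ⊤] h) :
    Measurable[predictableSigma ℱ] ((univ ×ˢ N).indicator h) := by
  have hS : MeasurableSet[predictableSigma ℱ] (univ ×ˢ N) :=
    measurableSet_predictableSigma_prod .univ fun t => hN t N subset_rfl
  let M : MeasurableSpace (ℝ × Ω) :=
    { MeasurableSet' := fun A => MeasurableSet[predictableSigma ℱ] (A ∩ univ ×ˢ N)
      measurableSet_empty := by simp
      measurableSet_compl := fun A hA => by
        rw [← sdiff_eq_compl_inter, ← sdiff_inter_self_eq_sdiff]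
        exact hS.diff hA
      measurableSet_iUnion := fun A hA => by
        rw [iUnion_inter]
        exact .iUnion hA }
  have hprod : @Prod.instMeasurableSpace ℝ Ω _ ⊤ ≤ M := by
    refine sup_le (MeasurableSpace.comap_le_iff_le_map.2 fun B hB => ?_)
      (MeasurableSpace.comap_le_iff_le_map.2 fun C _ => ?_)
    · show MeasurableSet[predictableSigma ℱ] (Prod.fst ⁻¹' B ∩ univ ×ˢ N)
      rw [univ_prod, ← Set.prod_eq]
      exact measurableSet_predictableSigma_prod hB fun t => hN t N subset_rfl
    · show MeasurableSet[predictableSigma ℱ] (Prod.snd ⁻¹' C ∩ univ ×ˢ N)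
      rw [univ_prod, ← preimage_inter, ← univ_prod]
      exact measurableSet_predictableSigma_prod .univ fun t => hN t _ inter_subset_right
  intro B hB
  have hhB : MeasurableSet[predictableSigma ℱ] (h ⁻¹' B ∩ univ ×ˢ N) := hprod _ (hh hB)
  rw [indicator_preimage]
  exact hhB.union ((@measurable_const _ _ _ (predictableSigma ℱ) _ _ hB).diff hS)

lemma PredictableProc.of_tendsto_ae {μ : Measure Ω} (hcpl : CompleteFiltration ℱ μ)
    {F : ℕ → ℝ → Ω → ℝ} {Y : ℝ → Ω → ℝ} (hF : ∀ n, PredictableProc ℱ (F n))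
    (hY : ∀ ω u, ContinuousWithinAt (Y · ω) (Ici u) u)
    (hFY : ∀ᵐ ω ∂μ, ∀ u, Tendsto (fun n => F n u ω) atTop (𝓝 (Y u ω))) :
    PredictableProc ℱ Y := by
  classical
  set N := {ω | ¬ ∀ u, Tendsto (fun n => F n u ω) atTop (𝓝 (Y u ω))}
  have hN : ∀ t C, C ⊆ N → MeasurableSet[ℱ t] C := fun t C hC =>
    hcpl t C (measure_mono_null hC (ae_iff.1 hFY))
  let _ : MeasurableSpace (ℝ × Ω) := predictableSigma ℱ
  have hS : MeasurableSet (univ ×ˢ N) :=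
    measurableSet_predictableSigma_prod .univ fun t => hN t N subset_rfl
  -- on `ℝ × N` every jointly measurable process is predictable, since all subsets of `N` are null
  have hYN : Measurable ((univ ×ˢ N).indicator fun p => Y p.1 p.2) :=
    measurable_predictableSigma_indicator_univ_prod hN
      (@measurable_uncurry_of_continuousWithinAt_Ici Ω ℝ ⊤ _ _ _ _ Y
        (fun _ => measurable_from_top) hY)
  refine measurable_of_tendsto_metrizable
    (f := fun n => (univ ×ˢ N).piecewise ((univ ×ˢ N).indicator fun p => Y p.1 p.2)
      fun p => F n p.1 p.2)
    (fun n => hYN.piecewise hS (hF n)) (tendsto_pi_nhds.2 ?_)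
  rintro ⟨u, ω⟩
  by_cases hω : ω ∈ N
  · simp [hω]
  · simpa [piecewise, hω] using (not_not.1 hω) u

end Predictable

lemma Assoc.ae_tendsto_sub_of_tendsto {Ω : Type*} {m : MeasurableSpace Ω} {μ : Measure Ω}
    {I : ℝ → ℝ → Ω → ℝ} {X : ℝ → Ω → ℝ} {Z : Ω → ℝ} (hXI : Assoc μ I X) {s : ℕ → ℝ}
    (hs : Tendsto s atTop atBot) (hXZ : ∀ᵐ ω ∂μ, Tendsto (fun n => X (s n) ω) atTop (𝓝 (Z ω))) :
    ∀ᵐ ω ∂μ, ∀ u, Tendsto (fun n => I (s n) u ω) atTop (𝓝 (X u ω - Z ω)) := by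
  filter_upwards [hXZ, ae_all_iff.2 fun n => hXI (s n)] with ω hω hXIω u
  refine (tendsto_const_nhds.sub hω).congr' ?_
  filter_upwards [hs.eventually_le_atBot u] with n hn
  rw [← hXIω n u, min_eq_right hn]

theorem stmt12_general {Ω : Type*} {m : MeasurableSpace Ω} {μ : Measure Ω}
    (ℱ : Filtration ℝ m) (hcpl : CompleteFiltration ℱ μ)
    (I : ℝ → ℝ → Ω → ℝ) (X : ℝ → Ω → ℝ) (Z : Ω → ℝ)
    (hadapt : ∀ s, Adapted ℱ (I s))
    (hX : ∀ ω, Cadlag fun t => X t ω) (hXI : Assoc μ I X)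
    (hlim : TendstoInMeasure μ (fun t : ℝ => X t) atBot Z) :
    Adapted ℱ (fun t ω => X t ω - Z ω) ∧
    Assoc μ I (fun t ω => X t ω - Z ω) ∧
    (∀ Y : ℝ → Ω → ℝ, (∀ ω, Cadlag fun t => Y t ω) → Assoc μ I Y →
      TendstoInMeasure μ (fun t : ℝ => Y t) atBot (fun _ => 0) →
      ∀ᵐ ω ∂μ, ∀ t, Y t ω = X t ω - Z ω) ∧
    ((∀ s, PredictableProc ℱ (I s)) → PredictableProc ℱ fun t ω => X t ω - Z ω) := by
  obtain ⟨s, hs, hXs⟩ := hlim.exists_seq_tendsto_ae'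
  have hIX := hXI.ae_tendsto_sub_of_tendsto hs hXs
  refine ⟨fun u => ?_, fun r => ?_, fun Y _ hYI hY0 => ?_, fun hpred => ?_⟩
  · exact measurable_of_tendsto_ae_of_null (ℱ.le u) (hcpl u) (fun n => hadapt (s n) u)
      (hIX.mono fun ω hω => hω u)
  · filter_upwards [hXI r] with ω hω u
    simp only [← hω u, sub_sub_sub_cancel_right]
  · obtain ⟨φ, hφ, hYφ⟩ := (hY0.comp hs).exists_seq_tendsto_ae
    have hsφ := hs.comp hφ.tendsto_atTop
    have hXφ := hXs.mono fun ω hω => hω.comp hφ.tendsto_atTop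
    filter_upwards [hXI.ae_tendsto_sub_of_tendsto hsφ hXφ,
      hYI.ae_tendsto_sub_of_tendsto hsφ hYφ] with ω hXω hYω u
    simpa using tendsto_nhds_unique (hYω u) (hXω u)
  · exact PredictableProc.of_tendsto_ae hcpl (fun n => hpred (s n))
      (fun ω u => ((hX ω).1 u).sub continuousWithinAt_const) hIX

/-- if `X` is associated with a consistent family `I` and `X_t → X_{-∞}`
in probability as `t → -∞`, then `X - X_{-∞}` is adapted and associated with `I`, it is
the unique càdlàg process associated with `I` converging to `0` in probability at `-∞`,
and it is predictable whenever every `ˢI` is predictable. -/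
theorem stmt12 {Ω : Type*} {m : MeasurableSpace Ω} {μ : Measure Ω} [IsProbabilityMeasure μ]
    (ℱ : Filtration ℝ m) (hrc : RightContinuousFiltration ℱ) (hcpl : CompleteFiltration ℱ μ)
    (I : ℝ → ℝ → Ω → ℝ) (X : ℝ → Ω → ℝ) (Z : Ω → ℝ)
    (hadapt : ∀ s, Adapted ℱ (I s))
    (hIcad : ∀ s ω, Cadlag fun t => I s t ω)
    (hzero : ∀ s t : ℝ, t ≤ s → ∀ᵐ ω ∂μ, I s t ω = 0)
    (hcons : ∀ s t u : ℝ, s ≤ t → t ≤ u → ∀ᵐ ω ∂μ, I s t ω + I t u ω = I s u ω)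
    (hX : ∀ ω, Cadlag fun t => X t ω) (hXI : Assoc μ I X)
    (hlim : TendstoInMeasure μ (fun t : ℝ => X t) atBot Z) :
    Adapted ℱ (fun t ω => X t ω - Z ω) ∧
    Assoc μ I (fun t ω => X t ω - Z ω) ∧
    (∀ Y : ℝ → Ω → ℝ, (∀ ω, Cadlag fun t => Y t ω) → Assoc μ I Y →
      TendstoInMeasure μ (fun t : ℝ => Y t) atBot (fun _ => 0) →
      ∀ᵐ ω ∂μ, ∀ t, Y t ω = X t ω - Z ω) ∧
    ((∀ s, PredictableProc ℱ (I s)) → PredictableProc ℱ fun t ω => X t ω - Z ω) :=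
  stmt12_general ℱ hcpl I X Z hadapt hX hXI hlim
end
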